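/- arXiv:2109.00496 — 9 statements merged into one kernel-verified Lean document; each statement's English description precedes it below -/
import Mathlib

section
/- Let T₀ > 0, let 0 < μ₁ < μ₂, let ω be a modulus of continuity, and let θ : (0,T₀) → (0,∞) be continuous and nonincreasing. Then the set D, defined as the union over all admissible parameters T₁ ∈ (0,T₀), γ with γ² ∈ (μ₁,μ₂), and η ∈ (0,1) of the classes D(T₀,μ₁,μ₂,ω,θ;T₁,γ,η), is dense in PS(T₀,μ₁,μ₂,ω,θ) with respect to the supremum distance: for every c ∈ PS(T₀,μ₁,μ₂,ω,θ) and every ε > 0 there exists c* ∈ D with sup_{t∈[0,T₀]} |c*(t) − c(t)| ≤ ε. -/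
open Set Filter MeasureTheory

/-- A modulus of continuity: positive for positive arguments, tends to `0` at `0⁺`,
nondecreasing, and `σ ↦ σ / ω σ` is nondecreasing on `(0, ∞)`. -/
def IsModulusOfContinuity (ω : ℝ → ℝ) : Prop :=
  (∀ σ : ℝ, 0 < σ → 0 < ω σ) ∧
  Tendsto ω (nhdsWithin 0 (Ioi 0)) (nhds 0) ∧
  (∀ s t : ℝ, 0 ≤ s → s ≤ t → ω s ≤ ω t) ∧
  (∀ s t : ℝ, 0 < s → s ≤ t → s / ω s ≤ t / ω t)

/-- Membership in the class `PS(T₀, μ₁, μ₂, ω, θ)` of propagation speeds. -/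
def MemPS (T0 μ1 μ2 : ℝ) (ω θ : ℝ → ℝ) (c : ℝ → ℝ) : Prop :=
  ContinuousOn c (Icc 0 T0) ∧
  LocallyLipschitzOn (Ioo 0 T0) c ∧
  (∀ t ∈ Ioo 0 T0, μ1 ≤ c t ∧ c t ≤ μ2) ∧
  (∀ t ∈ Icc 0 T0, ∀ s ∈ Icc 0 T0, |c t - c s| ≤ ω |t - s|) ∧
  (∀ᵐ t ∂(volume.restrict (Ioo 0 T0)), |deriv c t| ≤ θ t)

/-- The key quantity `m(λ) = inf { λ ω(1/λ) s + ∫_s^{T₀} θ : s ∈ (0, T₀] }`. -/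
noncomputable def mFun (T0 : ℝ) (ω θ : ℝ → ℝ) (lam : ℝ) : ℝ :=
  sInf ((fun s => lam * ω (1 / lam) * s + ∫ t in s..T0, θ t) '' Ioc 0 T0)

/-- Derivative within the time interval `[0, T₀]`. -/
noncomputable def der (T0 : ℝ) (u : ℝ → ℝ) : ℝ → ℝ :=
  fun t => derivWithin u (Icc 0 T0) t

/-- `u` is a (twice differentiable) solution of `u'' + λ² c(t) u = 0` on `[0, T₀]`. -/
def IsSol (T0 lam : ℝ) (c u : ℝ → ℝ) : Prop :=
  ∀ t ∈ Icc 0 T0,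
    HasDerivWithinAt u (der T0 u t) (Icc 0 T0) t ∧
    HasDerivWithinAt (der T0 u) (-(lam ^ 2 * c t * u t)) (Icc 0 T0) t

/-- Membership in the class `D(T₀,μ₁,μ₂,ω,θ; T₁,γ,η)` of coefficients that are constantly
equal to `γ²` on `[0,T₁]` and do not saturate the `ω`-continuity. -/
def MemD (T0 μ1 μ2 : ℝ) (ω θ : ℝ → ℝ) (T1 γ η : ℝ) (c : ℝ → ℝ) : Prop :=
  MemPS T0 μ1 μ2 ω θ c ∧
  (∀ t ∈ Icc 0 T1, c t = γ ^ 2) ∧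
  (∀ t ∈ Icc 0 T0, ∀ s ∈ Icc 0 T0, |c t - c s| ≤ (1 - η) * ω |t - s|)

set_option maxHeartbeats 1600000 in
/-- density of `D` in `PS`, Proposition "Density". -/
theorem D_dense_in_PS
    (T0 μ1 μ2 : ℝ) (ω θ : ℝ → ℝ)
    (hT0 : 0 < T0) (hμ1 : 0 < μ1) (hμ12 : μ1 < μ2)
    (hω : IsModulusOfContinuity ω)
    (hθcont : ContinuousOn θ (Ioo 0 T0))
    (hθpos : ∀ t ∈ Ioo 0 T0, 0 < θ t)
    (hθmono : AntitoneOn θ (Ioo 0 T0)) :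
    ∀ c : ℝ → ℝ, MemPS T0 μ1 μ2 ω θ c → ∀ ε : ℝ, 0 < ε →
      ∃ (T1 γ η : ℝ) (cstar : ℝ → ℝ),
        T1 ∈ Ioo 0 T0 ∧ 0 < γ ∧ γ ^ 2 ∈ Ioo μ1 μ2 ∧ η ∈ Ioo 0 1 ∧
        MemD T0 μ1 μ2 ω θ T1 γ η cstar ∧
        ∀ t ∈ Icc 0 T0, |cstar t - c t| ≤ ε := by
  intro c hc ε hε
  obtain ⟨hcont, hlip, hbound, homega, hderiv⟩ := hc
  have hωpos := hω.1
  have hωtend := hω.2.1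
  have hωmono := hω.2.2.1
  have hωnonneg : ∀ σ : ℝ, 0 ≤ σ → 0 ≤ ω σ := by
    intro σ hσ
    rcases eq_or_lt_of_le hσ with h | h
    · have h0 : |c 0 - c 0| ≤ ω |(0:ℝ) - 0| :=
        homega 0 ⟨le_refl 0, hT0.le⟩ 0 ⟨le_refl 0, hT0.le⟩
      simpa using h0.trans_eq (by rw [← h]; norm_num)
    · exact (hωpos σ h).le
  -- the target midpoint constant
  set m : ℝ := (μ1 + μ2) / 2 with hm
  have hmμ1 : μ1 < m := by rw [hm]; linarith
  have hmμ2 : m < μ2 := by rw [hm]; linarith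
  -- uniform bound on |m - c t|
  have hmid : T0 / 2 ∈ Ioo (0:ℝ) T0 := ⟨by linarith, by linarith⟩
  have hcmid := hbound (T0/2) hmid
  set M : ℝ := μ2 + ω T0 with hMdef
  have hM0 : 0 ≤ M := by
    have := hωnonneg T0 hT0.le
    have : (0:ℝ) ≤ ω T0 := this
    nlinarith
  have hcb : ∀ t ∈ Icc (0:ℝ) T0, |m - c t| ≤ M := by
    intro t ht
    have h1 : |c (T0/2) - c t| ≤ ω |T0/2 - t| :=
      homega (T0/2) ⟨by linarith, by linarith⟩ t ht
    have h2 : |T0/2 - t| ≤ T0 := by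
      rw [abs_le]; constructor <;> [linarith [ht.2]; linarith [ht.1]]
    have h3 : ω |T0/2 - t| ≤ ω T0 := hωmono _ _ (abs_nonneg _) h2
    have h4 : |m - c (T0/2)| ≤ μ2 := by
      rw [abs_le]; constructor <;> nlinarith [hcmid.1, hcmid.2]
    calc |m - c t| ≤ |m - c (T0/2)| + |c (T0/2) - c t| := by
          have := abs_sub_le (m) (c (T0/2)) (c t); linarith [abs_sub_le m (c (T0/2)) (c t)]
      _ ≤ μ2 + ω T0 := by linarith
  -- choose η
  set η : ℝ := min (1/2) (ε / (2 * (M + 1))) with hηdef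
  have hη0 : 0 < η := by
    apply lt_min (by norm_num)
    positivity
  have hη1 : η < 1 := lt_of_le_of_lt (min_le_left _ _) (by norm_num)
  have hηM : η * M ≤ ε / 2 := by
    have h1 : η ≤ ε / (2 * (M + 1)) := min_le_right _ _
    have h2 : η * M ≤ (ε / (2 * (M + 1))) * M := by
      apply mul_le_mul_of_nonneg_right h1 hM0
    have h3 : (ε / (2 * (M + 1))) * M ≤ ε / 2 := by
      rw [div_mul_eq_mul_div, div_le_div_iff₀ (by positivity) (by norm_num)]
      nlinarith
    linarith
  -- choose T1
  have hT1ex : ∃ T1 : ℝ, 0 < T1 ∧ T1 < T0 ∧ ω T1 < ε / 2 := by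
    have h1 : ∀ᶠ σ in nhdsWithin (0:ℝ) (Ioi 0), ω σ < ε / 2 :=
      hωtend.eventually_lt_const (by linarith)
    have h2 : ∀ᶠ σ in nhdsWithin (0:ℝ) (Ioi 0), σ < T0 :=
      mem_nhdsWithin_of_mem_nhds (isOpen_Iio.mem_nhds hT0)
    have h3 : ∀ᶠ σ in nhdsWithin (0:ℝ) (Ioi 0), σ ∈ Ioi (0:ℝ) :=
      self_mem_nhdsWithin
    obtain ⟨σ, ⟨hσ1, hσ2⟩, hσ3⟩ := ((h1.and h2).and h3).exists
    exact ⟨σ, hσ3, hσ2, hσ1⟩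
  obtain ⟨T1, hT1a, hT1b, hT1ω⟩ := hT1ex
  -- the approximating coefficient
  set cstar : ℝ → ℝ := fun t => (1 - η) * c (max T1 t) + η * m with hcstar
  have hmaps : ∀ t ∈ Icc (0:ℝ) T0, max T1 t ∈ Icc (0:ℝ) T0 := by
    intro t ht
    exact ⟨le_trans hT1a.le (le_max_left _ _), max_le hT1b.le ht.2⟩
  have hmapso : ∀ t ∈ Ioo (0:ℝ) T0, max T1 t ∈ Ioo (0:ℝ) T0 := by
    intro t ht
    exact ⟨lt_of_lt_of_le hT1a (le_max_left _ _), max_lt hT1b ht.2⟩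
  -- the value on [0, T1]
  set v : ℝ := (1 - η) * c T1 + η * m with hv
  have hcT1 := hbound T1 ⟨hT1a, hT1b⟩
  have hvμ1 : μ1 < v := by rw [hv]; nlinarith [hcT1.1]
  have hvμ2 : v < μ2 := by rw [hv]; nlinarith [hcT1.2]
  have hv0 : 0 < v := lt_trans hμ1 hvμ1
  refine ⟨T1, Real.sqrt v, η, cstar, ⟨hT1a, hT1b⟩, Real.sqrt_pos.mpr hv0, ?_, ⟨hη0, hη1⟩, ?_, ?_⟩
  · rw [Real.sq_sqrt hv0.le]; exact ⟨hvμ1, hvμ2⟩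
  · -- MemD
    have homega' : ∀ t ∈ Icc (0:ℝ) T0, ∀ s ∈ Icc (0:ℝ) T0,
        |cstar t - cstar s| ≤ (1 - η) * ω |t - s| := by
      intro t ht s hs
      have h1 : cstar t - cstar s = (1 - η) * (c (max T1 t) - c (max T1 s)) := by
        rw [hcstar]; ring
      rw [h1, abs_mul, abs_of_nonneg (by linarith : (0:ℝ) ≤ 1 - η)]
      apply mul_le_mul_of_nonneg_left _ (by linarith : (0:ℝ) ≤ 1 - η)
      have h2 : |c (max T1 t) - c (max T1 s)| ≤ ω |max T1 t - max T1 s| :=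
        homega _ (hmaps t ht) _ (hmaps s hs)
      refine h2.trans (hωmono _ _ (abs_nonneg _) ?_)
      calc |max T1 t - max T1 s| = |max t T1 - max s T1| := by rw [max_comm T1 t, max_comm T1 s]
        _ ≤ |t - s| := abs_max_sub_max_le_abs t s T1
    refine ⟨⟨?_, ?_, ?_, ?_, ?_⟩, ?_, homega'⟩
    · -- continuity
      have h1 : ContinuousOn (fun t : ℝ => c (max T1 t)) (Icc 0 T0) := by
        exact hcont.comp ((continuous_const.max continuous_id).continuousOn) hmaps
      exact ((continuousOn_const.mul h1).add continuousOn_const)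
    · -- locally Lipschitz
      intro x hx
      obtain ⟨K, t, ht, hK⟩ := hlip (hmapso x hx)
      have htend : Filter.Tendsto (fun s : ℝ => max T1 s) (nhdsWithin x (Ioo 0 T0))
          (nhdsWithin (max T1 x) (Ioo 0 T0)) := by
        apply ((continuous_const.max continuous_id).continuousWithinAt).tendsto_nhdsWithin hmapso
      refine ⟨K, (fun s : ℝ => max T1 s) ⁻¹' t, htend ht, ?_⟩
      rw [lipschitzOnWith_iff_dist_le_mul]
      intro a ha b hb
      have h1 : dist (cstar a) (cstar b) = (1 - η) * dist (c (max T1 a)) (c (max T1 b)) := by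
        simp only [Real.dist_eq, hcstar]
        have he : (1 - η) * c (max T1 a) + η * m - ((1 - η) * c (max T1 b) + η * m)
            = (1 - η) * (c (max T1 a) - c (max T1 b)) := by ring
        rw [he, abs_mul, abs_of_nonneg (by linarith : (0:ℝ) ≤ 1 - η)]
      rw [h1]
      have h2 : dist (c (max T1 a)) (c (max T1 b)) ≤ K * dist (max T1 a) (max T1 b) :=
        (lipschitzOnWith_iff_dist_le_mul.mp hK) _ ha _ hb
      have h3 : dist (max T1 a) (max T1 b) ≤ dist a b := by
        simp only [Real.dist_eq]
        calc |max T1 a - max T1 b| = |max a T1 - max b T1| := by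
              rw [max_comm T1 a, max_comm T1 b]
          _ ≤ |a - b| := abs_max_sub_max_le_abs a b T1
      have hK0 : (0:ℝ) ≤ (K:ℝ) := K.coe_nonneg
      have hd0 : (0:ℝ) ≤ dist (c (max T1 a)) (c (max T1 b)) := dist_nonneg
      nlinarith [mul_le_mul_of_nonneg_left h3 hK0]
    · -- bounds
      intro t ht
      have h1 := hbound _ (hmapso t ht)
      constructor
      · show μ1 ≤ (1 - η) * c (max T1 t) + η * m
        nlinarith [h1.1]
      · show (1 - η) * c (max T1 t) + η * m ≤ μ2
        nlinarith [h1.2]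
    · -- ω-continuity (PS version)
      intro t ht s hs
      refine (homega' t ht s hs).trans ?_
      have := hωnonneg |t - s| (abs_nonneg _)
      nlinarith
    · -- derivative bound
      have hne : ∀ᵐ t ∂(volume.restrict (Ioo 0 T0)), t ≠ T1 := by
        refine ae_restrict_of_ae ?_
        have : (volume : Measure ℝ) {T1} = 0 := measure_singleton T1
        rw [ae_iff]
        convert this using 2
        ext x; simp
      have hmem : ∀ᵐ t ∂(volume.restrict (Ioo 0 T0)), t ∈ Ioo (0:ℝ) T0 :=
        ae_restrict_mem measurableSet_Ioo
      filter_upwards [hderiv, hne, hmem] with t hd hn hmem'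
      rcases lt_or_gt_of_ne hn with h | h
      · -- t < T1 : cstar is locally constant
        have hev : cstar =ᶠ[nhds t] fun _ => (1 - η) * c T1 + η * m := by
          filter_upwards [isOpen_Iio.mem_nhds h] with s hs
          show (1 - η) * c (max T1 s) + η * m = _
          rw [max_eq_left (le_of_lt hs)]
        rw [hev.deriv_eq, deriv_const]
        simpa using (hθpos t hmem').le
      · -- t > T1 : cstar agrees with (1-η)c + ηm
        have hev : cstar =ᶠ[nhds t] fun s => (1 - η) * c s + η * m := by
          filter_upwards [isOpen_Ioi.mem_nhds h] with s hs
          show (1 - η) * c (max T1 s) + η * m = _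
          rw [max_eq_right (le_of_lt hs)]
        rw [hev.deriv_eq, deriv_add_const, deriv_const_mul_field]
        rw [abs_mul, abs_of_nonneg (by linarith : (0:ℝ) ≤ 1 - η)]
        have := hθpos t hmem'
        nlinarith [abs_nonneg (deriv c t)]
    · -- constant on [0, T1]
      intro t ht
      rw [Real.sq_sqrt hv0.le]
      show (1 - η) * c (max T1 t) + η * m = v
      rw [max_eq_left ht.2, hv]
  · -- closeness
    intro t ht
    have h1 : cstar t - c t = (1 - η) * (c (max T1 t) - c t) + η * (m - c t) := by
      rw [hcstar]; ring
    have h2 : |c (max T1 t) - c t| ≤ ω T1 := by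
      have ha : |c (max T1 t) - c t| ≤ ω |max T1 t - t| := homega _ (hmaps t ht) t ht
      refine ha.trans (hωmono _ _ (abs_nonneg _) ?_)
      rw [abs_of_nonneg (by simp [le_max_right] : (0:ℝ) ≤ max T1 t - t)]
      have := ht.1
      rcases le_total T1 t with h | h
      · rw [max_eq_right h]; linarith
      · rw [max_eq_left h]; linarith
    have h3 := hcb t ht
    have hω1 := hωnonneg T1 hT1a.le
    calc |cstar t - c t| ≤ (1 - η) * |c (max T1 t) - c t| + η * |m - c t| := by
          rw [h1]
          refine (abs_add_le _ _).trans ?_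
          rw [abs_mul, abs_mul, abs_of_nonneg (by linarith : (0:ℝ) ≤ 1 - η),
            abs_of_nonneg hη0.le]
      _ ≤ (1 - η) * ω T1 + η * M := by
          have := mul_le_mul_of_nonneg_left h2 (by linarith : (0:ℝ) ≤ 1 - η)
          have := mul_le_mul_of_nonneg_left h3 hη0.le
          linarith
      _ ≤ ε / 2 + ε / 2 := by nlinarith
      _ = ε := by ring
end

section
/- Let ε, γ, λ be positive real numbers such that ε ≤ 8γ³λ, and let a < b be real numbers such that a·γ·λ/(2π) and b·γ·λ/(2π) are natural numbers. Then the function w := w_{ε,γ,λ} (with parameter a) satisfies the differential equation w''(t) + λ²·(γ² − φ_{ε,γ,λ}(t))·w(t) = 0 for every t ∈ [a,b], together with w(a) = 0, w'(a) = 1, w(b) = 0, and w'(b) = exp(ε·(b−a)/(16γ²)). -/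
open Set Filter

/-- The building-block perturbation
`φ_{ε,γ,λ}(t) = (ε/(4γλ)) sin(2γλt) + (ε²/(64γ⁴λ²)) sin⁴(γλt)`. -/
noncomputable def phiF (ε γ lam t : ℝ) : ℝ :=
  ε / (4 * γ * lam) * Real.sin (2 * γ * lam * t) +
    ε ^ 2 / (64 * γ ^ 4 * lam ^ 2) * (Real.sin (γ * lam * t)) ^ 4

/-- The building-block solution
`w_{ε,γ,λ}(t) = (1/(γλ)) sin(γλt) exp((ε/(16γ²))(t-a) - (ε/(32γ³λ)) sin(2γλt))`. -/
noncomputable def wF (ε γ lam a t : ℝ) : ℝ :=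
  1 / (γ * lam) * Real.sin (γ * lam * t) *
    Real.exp (ε / (16 * γ ^ 2) * (t - a) - ε / (32 * γ ^ 3 * lam) * Real.sin (2 * γ * lam * t))

/-!
With `k = γλ` and `w = k⁻¹ sin(kt) e^{g(t)}`, the exponent `g` is chosen so that
`g' = (ε/(8γ²)) sin²(kt)`. Hence `w' = e^g (cos(kt) + (ε/(8γ³λ)) sin³(kt))`, and differentiating
once more gives `w'' = -λ²(γ² - φ) w` by the double-angle formulas. At the endpoints `kt ∈ 2πℕ`,
so `sin(kt) = sin(2kt) = 0` and `cos(kt) = 1`, which gives the boundary values.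
-/

open Real

lemma cos_eq_one_of_div_two_pi_eq_natCast {x : ℝ} (h : ∃ n : ℕ, x / (2 * π) = n) :
    cos x = 1 := by
  obtain ⟨n, hn⟩ := h
  rw [div_eq_iff (by positivity)] at hn
  exact (cos_eq_one_iff x).2 ⟨n, by rw [hn]; push_cast; ring⟩

lemma sin_eq_zero_of_cos_eq_one {x : ℝ} (h : cos x = 1) : sin x = 0 :=
  sin_eq_zero_iff_cos_eq.2 (Or.inl h)

lemma sin_two_mul_eq_zero_of_cos_eq_one {x : ℝ} (h : cos x = 1) : sin (2 * x) = 0 := by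
  rw [sin_two_mul, sin_eq_zero_of_cos_eq_one h, mul_zero, zero_mul]

lemma hasDerivAt_sin_const_mul (c t : ℝ) :
    HasDerivAt (fun s => sin (c * s)) (cos (c * t) * c) t := by
  simpa using ((hasDerivAt_id t).const_mul c).sin

lemma hasDerivAt_cos_const_mul (c t : ℝ) :
    HasDerivAt (fun s => cos (c * s)) (-sin (c * t) * c) t := by
  simpa using ((hasDerivAt_id t).const_mul c).cos

section BuildingBlock

variable (ε γ lam a : ℝ)

noncomputable def wFExponent (t : ℝ) : ℝ :=
  ε / (16 * γ ^ 2) * (t - a) - ε / (32 * γ ^ 3 * lam) * sin (2 * γ * lam * t)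

noncomputable def wFDeriv (t : ℝ) : ℝ :=
  exp (wFExponent ε γ lam a t) * (cos (γ * lam * t) + ε / (8 * γ ^ 3 * lam) * sin (γ * lam * t) ^ 3)

lemma wF_eq_mul_exp (t : ℝ) :
    wF ε γ lam a t = 1 / (γ * lam) * sin (γ * lam * t) * exp (wFExponent ε γ lam a t) := rfl

variable {γ lam}

lemma hasDerivAt_wFExponent (hγ : γ ≠ 0) (hlam : lam ≠ 0) (t : ℝ) :
    HasDerivAt (wFExponent ε γ lam a) (ε / (8 * γ ^ 2) * sin (γ * lam * t) ^ 2) t := by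
  have h := (((hasDerivAt_id t).sub_const a).const_mul (ε / (16 * γ ^ 2))).sub
    ((hasDerivAt_sin_const_mul (2 * γ * lam) t).const_mul (ε / (32 * γ ^ 3 * lam)))
  refine h.congr_deriv ?_
  rw [show 2 * γ * lam * t = 2 * (γ * lam * t) by ring, cos_two_mul, cos_sq']
  field_simp
  ring

lemma hasDerivAt_wF (hγ : γ ≠ 0) (hlam : lam ≠ 0) (t : ℝ) :
    HasDerivAt (wF ε γ lam a) (wFDeriv ε γ lam a t) t := by
  have h := ((hasDerivAt_sin_const_mul (γ * lam) t).const_mul (1 / (γ * lam))).mul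
    (hasDerivAt_wFExponent ε a hγ hlam t).exp
  rw [funext (wF_eq_mul_exp ε γ lam a)]
  refine h.congr_deriv ?_
  unfold wFDeriv
  field_simp

lemma hasDerivAt_wFDeriv (hγ : γ ≠ 0) (hlam : lam ≠ 0) (t : ℝ) :
    HasDerivAt (wFDeriv ε γ lam a) (-(lam ^ 2 * (γ ^ 2 - phiF ε γ lam t) * wF ε γ lam a t)) t := by
  have h := (hasDerivAt_wFExponent ε a hγ hlam t).exp.mul ((hasDerivAt_cos_const_mul (γ * lam) t).add
    (((hasDerivAt_sin_const_mul (γ * lam) t).pow 3).const_mul (ε / (8 * γ ^ 3 * lam))))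
  refine h.congr_deriv ?_
  rw [wF_eq_mul_exp, phiF, show 2 * γ * lam * t = 2 * (γ * lam * t) by ring, sin_two_mul]
  simp only [Pi.add_apply, Pi.pow_apply]
  field_simp
  ring

variable {ε a}

lemma wF_eq_zero_of_cos_eq_one {t : ℝ} (h : cos (γ * lam * t) = 1) : wF ε γ lam a t = 0 := by
  rw [wF_eq_mul_exp, sin_eq_zero_of_cos_eq_one h, mul_zero, zero_mul]

lemma wFDeriv_eq_of_cos_eq_one {t : ℝ} (h : cos (γ * lam * t) = 1) :
    wFDeriv ε γ lam a t = exp (ε / (16 * γ ^ 2) * (t - a)) := by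
  rw [wFDeriv, wFExponent, show 2 * γ * lam * t = 2 * (γ * lam * t) by ring,
    sin_two_mul_eq_zero_of_cos_eq_one h, sin_eq_zero_of_cos_eq_one h, h]
  ring_nf

end BuildingBlock

theorem wF_solves_ode_general
    (ε γ lam a b : ℝ) (hγ : 0 < γ) (hlam : 0 < lam)
    (hab : a < b)
    (haN : ∃ n : ℕ, a * γ * lam / (2 * Real.pi) = n)
    (hbN : ∃ n : ℕ, b * γ * lam / (2 * Real.pi) = n) :
    (∀ t ∈ Icc a b,
      HasDerivWithinAt (wF ε γ lam a)
        (derivWithin (wF ε γ lam a) (Icc a b) t) (Icc a b) t ∧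
      HasDerivWithinAt (fun s => derivWithin (wF ε γ lam a) (Icc a b) s)
        (-(lam ^ 2 * (γ ^ 2 - phiF ε γ lam t) * wF ε γ lam a t)) (Icc a b) t) ∧
    wF ε γ lam a a = 0 ∧
    derivWithin (wF ε γ lam a) (Icc a b) a = 1 ∧
    wF ε γ lam a b = 0 ∧
    derivWithin (wF ε γ lam a) (Icc a b) b = Real.exp (ε * (b - a) / (16 * γ ^ 2)) := by
  have hw := hasDerivAt_wF ε a hγ.ne' hlam.ne'
  have hdw : ∀ t ∈ Icc a b, derivWithin (wF ε γ lam a) (Icc a b) t = wFDeriv ε γ lam a t :=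
    fun t ht => (hw t).hasDerivWithinAt.derivWithin (uniqueDiffOn_Icc hab t ht)
  have hca : cos (γ * lam * a) = 1 := by
    rw [show γ * lam * a = a * γ * lam by ring]; exact cos_eq_one_of_div_two_pi_eq_natCast haN
  have hcb : cos (γ * lam * b) = 1 := by
    rw [show γ * lam * b = b * γ * lam by ring]; exact cos_eq_one_of_div_two_pi_eq_natCast hbN
  refine ⟨fun t ht => ⟨?_, ?_⟩, wF_eq_zero_of_cos_eq_one hca, ?_, wF_eq_zero_of_cos_eq_one hcb, ?_⟩
  · rw [hdw t ht]; exact (hw t).hasDerivWithinAt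
  · exact (hasDerivAt_wFDeriv ε a hγ.ne' hlam.ne' t).hasDerivWithinAt.congr hdw (hdw t ht)
  · rw [hdw a (left_mem_Icc.2 hab.le), wFDeriv_eq_of_cos_eq_one hca, sub_self, mul_zero, exp_zero]
  · rw [hdw b (right_mem_Icc.2 hab.le), wFDeriv_eq_of_cos_eq_one hcb]; ring_nf

/-- Lemma "Basic block", statement (3):
`w = w_{ε,γ,λ}` solves `w'' + λ²(γ² - φ_{ε,γ,λ}(t)) w = 0` on `[a,b]` with the indicated
initial and final data. -/
theorem wF_solves_ode
    (ε γ lam a b : ℝ) (hε : 0 < ε) (hγ : 0 < γ) (hlam : 0 < lam)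
    (h8 : ε ≤ 8 * γ ^ 3 * lam) (hab : a < b)
    (haN : ∃ n : ℕ, a * γ * lam / (2 * Real.pi) = n)
    (hbN : ∃ n : ℕ, b * γ * lam / (2 * Real.pi) = n) :
    (∀ t ∈ Icc a b,
      HasDerivWithinAt (wF ε γ lam a)
        (derivWithin (wF ε γ lam a) (Icc a b) t) (Icc a b) t ∧
      HasDerivWithinAt (fun s => derivWithin (wF ε γ lam a) (Icc a b) s)
        (-(lam ^ 2 * (γ ^ 2 - phiF ε γ lam t) * wF ε γ lam a t)) (Icc a b) t) ∧
    wF ε γ lam a a = 0 ∧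
    derivWithin (wF ε γ lam a) (Icc a b) a = 1 ∧
    wF ε γ lam a b = 0 ∧
    derivWithin (wF ε γ lam a) (Icc a b) b = Real.exp (ε * (b - a) / (16 * γ ^ 2)) :=
  wF_solves_ode_general ε γ lam a b hγ hlam hab haN hbN
end

section
/- Let T₀ > 0, 0 < μ₁ < μ₂, ω a modulus of continuity, θ : (0,T₀) → (0,∞) continuous and nonincreasing, and let c* ∈ D(T₀,μ₁,μ₂,ω,θ;T₁,γ,η) for admissible parameters T₁, γ, η. Set ν₁ := min{1, √μ₁/π}. Let λ > 0 satisfy ν₁·ω(1/λ) ≤ 8γ³ and (ν₁/(2γ))·ω(1/λ) ≤ min{γ² − μ₁, μ₂ − γ²}. Let 0 < a < b < T₁ be such that a·γ·λ/(2π) and b·γ·λ/(2π) are natural numbers, ω(b) ≤ η·ω(T₁ − b), and ν₁·λ·ω(1/λ) ≤ θ(b). Set ε := ν₁·λ·ω(1/λ) and define c_λ(t) := c*(t) for t ∈ [0,a] ∪ [b,T₀] and c_λ(t) := γ² − φ_{ε,γ,λ}(t) for t ∈ [a,b]. Then c_λ belongs to PS(T₀,μ₁,μ₂,ω,θ) and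 |c_λ(t) − c*(t)| ≤ (ν₁/(2γ))·ω(1/λ) for every t ∈ [0,T₀]. -/
open Set Filter MeasureTheory

/-- The constant `ν₁ = min{1, √μ₁/π}`. -/
noncomputable def nu1 (μ1 : ℝ) : ℝ := min 1 (Real.sqrt μ1 / Real.pi)

/-- The coefficient of the `ω`-construction: `c* ` outside `[a,b]`, and
`γ² - φ_{ε,γ,λ}` on `[a,b]`. -/
noncomputable def omegaConstr (cstar : ℝ → ℝ) (ε γ lam a b : ℝ) : ℝ → ℝ :=
  fun t => if a ≤ t ∧ t ≤ b then γ ^ 2 - phiF ε γ lam t else cstar t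

/-!
Because `φ_{ε,γ,λ}` vanishes at `a` and `b` (where `γλt ∈ 2πℕ`) and `c* = γ²` on `[a, b]`,
the new coefficient is `c* - ψ` with `ψ := φ_{ε,γ,λ} ∘ proj_{[a,b]}`. The condition
`ε ≤ 8γ³λ` gives `|φ'| ≤ ε` and `|φ| ≤ 3ε/(8γλ)`, so `ψ` is `λ ω(1/λ)`-Lipschitz and
oscillates by at most `ω(1/λ)`; as `σ ↦ σ / ω σ` is nondecreasing, these two bounds combine
into `|ψ t - ψ s| ≤ ω |t - s|`. Across `T₁` the slack `η ω` left by `c*` absorbs `ψ`, since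
`ω b ≤ η ω (T₁ - b)`. Finally `|φ'| ≤ ε ≤ θ b ≤ θ` on `(a, b)` since `θ` is nonincreasing.
-/

open Real

theorem IsModulusOfContinuity.min_le {ω : ℝ → ℝ} (hω : IsModulusOfContinuity ω) {lam σ : ℝ}
    (hlam : 0 < lam) (hσ : 0 < σ) : min (lam * ω (1 / lam) * σ) (ω (1 / lam)) ≤ ω σ := by
  obtain ⟨hpos, -, hmono, hdiv⟩ := hω
  rcases le_total σ (1 / lam) with h | h
  · refine min_le_of_left_le ?_
    have key := hdiv σ (1 / lam) hσ h
    rw [div_le_div_iff₀ (hpos σ hσ) (hpos _ (by positivity))] at key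
    calc lam * ω (1 / lam) * σ = lam * (σ * ω (1 / lam)) := by ring
      _ ≤ lam * (1 / lam * ω σ) := by gcongr
      _ = ω σ := by field_simp
  · exact min_le_of_right_le (hmono _ σ (by positivity) h)

theorem IsModulusOfContinuity.abs_sub_le_of_lipschitzWith {ω f : ℝ → ℝ}
    (hω : IsModulusOfContinuity ω) {K : NNReal} {lam s t : ℝ} (hlam : 0 < lam)
    (hf : LipschitzWith K f) (hK : (K : ℝ) ≤ lam * ω (1 / lam))
    (hbound : ∀ x, |f x| ≤ ω (1 / lam) / 2) (hst : s < t) : |f t - f s| ≤ ω (t - s) := by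
  have hts : 0 < t - s := sub_pos.mpr hst
  refine (le_min ?_ ?_).trans (hω.min_le hlam hts)
  · calc |f t - f s| ≤ K * (t - s) := by
          simpa [Real.dist_eq, abs_of_pos hts] using hf.dist_le_mul t s
      _ ≤ lam * ω (1 / lam) * (t - s) := by gcongr
  · linarith [abs_sub (f t) (f s), hbound t, hbound s]

theorem LipschitzWith.iccExtend {α : Type*} [PseudoEMetricSpace α] {K : NNReal} {f : ℝ → α}
    (hf : LipschitzWith K f) {a b : ℝ} (hab : a ≤ b) :
    LipschitzWith K (IccExtend hab (f ∘ Subtype.val)) := by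
  have h := hf.comp ((LipschitzWith.subtype_val _).comp (LipschitzWith.projIcc hab))
  rwa [mul_one, mul_one] at h

theorem nu1_nonneg (μ1 : ℝ) : 0 ≤ nu1 μ1 :=
  le_min zero_le_one (by positivity)

theorem nu1_le_one (μ1 : ℝ) : nu1 μ1 ≤ 1 :=
  min_le_left _ _

theorem nu1_le_of_le_sq {μ1 γ : ℝ} (hγ : 0 ≤ γ) (h : μ1 ≤ γ ^ 2) : nu1 μ1 ≤ γ :=
  calc nu1 μ1 ≤ √μ1 / π := min_le_right _ _
    _ ≤ √μ1 := div_le_self (sqrt_nonneg _) (one_le_pi_div_two.trans (half_le_self pi_pos.le))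
    _ ≤ γ := sqrt_le_iff.mpr ⟨hγ, h⟩

theorem nu1_div_mul_le_half {μ1 γ w : ℝ} (hγ : 0 < γ) (hw : 0 ≤ w) (h : μ1 ≤ γ ^ 2) :
    nu1 μ1 / (2 * γ) * w ≤ w / 2 := by
  rw [div_mul_eq_mul_div, div_le_div_iff₀ (by positivity) two_pos]
  nlinarith [nu1_le_of_le_sq hγ.le h]

section Phi

variable {ε γ lam : ℝ}

theorem hasDerivAt_phiF (hγ : γ ≠ 0) (hlam : lam ≠ 0) (t : ℝ) :
    HasDerivAt (phiF ε γ lam)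
      (ε / 2 * cos (2 * γ * lam * t) +
        ε ^ 2 / (16 * γ ^ 3 * lam) * sin (γ * lam * t) ^ 3 * cos (γ * lam * t)) t := by
  have h1 := ((hasDerivAt_id t).const_mul (2 * γ * lam)).sin
  have h2 := (((hasDerivAt_id t).const_mul (γ * lam)).sin).pow 4
  refine ((h1.const_mul (ε / (4 * γ * lam))).add
    (h2.const_mul (ε ^ 2 / (64 * γ ^ 4 * lam ^ 2)))).congr_deriv ?_
  simp only [id, mul_one]
  field_simp
  ring

variable (hγ : 0 < γ) (hlam : 0 < lam) (hε : 0 ≤ ε) (hε8 : ε ≤ 8 * γ ^ 3 * lam)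
include hγ hlam hε hε8

theorem abs_deriv_phiF_le (t : ℝ) : |deriv (phiF ε γ lam) t| ≤ ε := by
  rw [(hasDerivAt_phiF hγ.ne' hlam.ne' t).deriv]
  have hcoef : ε ^ 2 / (16 * γ ^ 3 * lam) ≤ ε / 2 := by
    rw [div_le_div_iff₀ (by positivity) two_pos]
    nlinarith
  have hsin : |sin (γ * lam * t) ^ 3| ≤ 1 := by
    rw [abs_pow]; exact pow_le_one₀ (abs_nonneg _) (abs_sin_le_one _)
  calc _ ≤ ε / 2 * |cos (2 * γ * lam * t)| +
        ε ^ 2 / (16 * γ ^ 3 * lam) * |sin (γ * lam * t) ^ 3| * |cos (γ * lam * t)| := by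
        refine (abs_add_le _ _).trans_eq ?_
        rw [abs_mul, abs_mul, abs_mul, abs_of_nonneg (by positivity : 0 ≤ ε / 2),
          abs_of_nonneg (by positivity : 0 ≤ ε ^ 2 / (16 * γ ^ 3 * lam))]
    _ ≤ ε / 2 * 1 + ε / 2 * 1 * 1 := by
        gcongr
        · exact abs_cos_le_one _
        · exact abs_cos_le_one _
    _ = ε := by ring

theorem lipschitzWith_phiF : LipschitzWith ε.toNNReal (phiF ε γ lam) := by
  refine lipschitzWith_of_nnnorm_deriv_le
    (fun t => (hasDerivAt_phiF hγ.ne' hlam.ne' t).differentiableAt) fun t => ?_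
  rw [← NNReal.coe_le_coe, coe_nnnorm, Real.coe_toNNReal _ hε]
  exact abs_deriv_phiF_le hγ hlam hε hε8 t

theorem abs_phiF_le (t : ℝ) : |phiF ε γ lam t| ≤ 3 * ε / (8 * γ * lam) := by
  have hcoef : ε ^ 2 / (64 * γ ^ 4 * lam ^ 2) ≤ ε / (8 * γ * lam) := by
    rw [div_le_div_iff₀ (by positivity) (by positivity)]
    nlinarith [mul_le_mul_of_nonneg_left hε8 (by positivity : 0 ≤ ε * (8 * γ * lam))]
  have hsin : |sin (γ * lam * t) ^ 4| ≤ 1 := by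
    rw [abs_pow]; exact pow_le_one₀ (abs_nonneg _) (abs_sin_le_one _)
  calc _ ≤ ε / (4 * γ * lam) * |sin (2 * γ * lam * t)| +
        ε ^ 2 / (64 * γ ^ 4 * lam ^ 2) * |sin (γ * lam * t) ^ 4| := by
        refine (abs_add_le _ _).trans_eq ?_
        rw [abs_mul, abs_mul, abs_of_nonneg (by positivity : 0 ≤ ε / (4 * γ * lam)),
          abs_of_nonneg (by positivity : 0 ≤ ε ^ 2 / (64 * γ ^ 4 * lam ^ 2))]
    _ ≤ ε / (4 * γ * lam) * 1 + ε / (8 * γ * lam) * 1 := by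
        gcongr
        exact abs_sin_le_one _
    _ = 3 * ε / (8 * γ * lam) := by field_simp; ring

end Phi

theorem abs_phiF_nu1_le {μ1 γ lam w : ℝ} (hγ : 0 < γ) (hlam : 0 < lam) (hw : 0 ≤ w)
    (h8 : nu1 μ1 * w ≤ 8 * γ ^ 3) (t : ℝ) :
    |phiF (nu1 μ1 * lam * w) γ lam t| ≤ nu1 μ1 / (2 * γ) * w := by
  have hν := nu1_nonneg μ1
  calc _ ≤ 3 * (nu1 μ1 * lam * w) / (8 * γ * lam) :=
        abs_phiF_le hγ hlam (by positivity) (by nlinarith) t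
    _ = 3 / 4 * (nu1 μ1 / (2 * γ) * w) := by field_simp; ring
    _ ≤ nu1 μ1 / (2 * γ) * w := by linarith [show 0 ≤ nu1 μ1 / (2 * γ) * w by positivity]

theorem phiF_eq_zero {ε γ lam t : ℝ} {n : ℕ} (h : t * γ * lam / (2 * π) = n) :
    phiF ε γ lam t = 0 := by
  have ht : γ * lam * t = (2 * n : ℕ) * π := by
    push_cast
    rw [← h]
    field_simp [pi_ne_zero]
  have h2t : 2 * γ * lam * t = (2 * (2 * n) : ℕ) * π := by
    rw [mul_assoc 2 γ, mul_assoc 2 (γ * lam), ht]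
    push_cast
    ring
  rw [phiF, ht, h2t, sin_nat_mul_pi, sin_nat_mul_pi]
  ring

section Construction

variable {cstar : ℝ → ℝ} {ε γ lam a b : ℝ}

theorem omegaConstr_eq_sub_IccExtend (hab : a ≤ b) (hc : ∀ t ∈ Icc a b, cstar t = γ ^ 2)
    (ha : phiF ε γ lam a = 0) (hb : phiF ε γ lam b = 0) :
    omegaConstr cstar ε γ lam a b = cstar - IccExtend hab (phiF ε γ lam ∘ Subtype.val) := by
  ext t
  simp only [omegaConstr, Pi.sub_apply]
  by_cases ht : a ≤ t ∧ t ≤ b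
  · rw [if_pos ht, IccExtend_of_mem _ _ ht, hc t ht]
    rfl
  rw [if_neg ht]
  rcases le_total t a with hta | hat
  · rw [IccExtend_of_le_left _ _ hta, Function.comp_apply, ha, sub_zero]
  · have hbt : b ≤ t := (lt_of_not_ge fun htb => ht ⟨hat, htb⟩).le
    rw [IccExtend_of_right_le _ _ hbt, Function.comp_apply, hb, sub_zero]

theorem omegaConstr_mem_Icc {μ1 μ2 t : ℝ} (hc : cstar t ∈ Icc μ1 μ2)
    (hφ : |phiF ε γ lam t| ≤ min (γ ^ 2 - μ1) (μ2 - γ ^ 2)) :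
    omegaConstr cstar ε γ lam a b t ∈ Icc μ1 μ2 := by
  unfold omegaConstr
  split_ifs
  · obtain ⟨hlo, hhi⟩ := abs_le.mp hφ
    constructor <;> linarith [min_le_left (γ ^ 2 - μ1) (μ2 - γ ^ 2),
      min_le_right (γ ^ 2 - μ1) (μ2 - γ ^ 2)]
  · exact hc

theorem deriv_omegaConstr_of_mem_Ioo {t : ℝ} (ht : t ∈ Ioo a b) :
    deriv (omegaConstr cstar ε γ lam a b) t = -deriv (phiF ε γ lam) t := by
  have hloc : omegaConstr cstar ε γ lam a b =ᶠ[nhds t] fun x => γ ^ 2 - phiF ε γ lam x := by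
    filter_upwards [Ioo_mem_nhds ht.1 ht.2] with x hx
    simp [omegaConstr, hx.1.le, hx.2.le]
  rw [hloc.deriv_eq, deriv_const_sub]

theorem deriv_omegaConstr_of_notMem_Icc {t : ℝ} (ht : t ∉ Icc a b) :
    deriv (omegaConstr cstar ε γ lam a b) t = deriv cstar t := by
  have hloc : omegaConstr cstar ε γ lam a b =ᶠ[nhds t] cstar := by
    filter_upwards [isClosed_Icc.isOpen_compl.mem_nhds ht] with x hx
    exact if_neg hx
  rw [hloc.deriv_eq]

theorem ae_abs_deriv_omegaConstr_le {μ : Measure ℝ} [NullSingletonClass μ] {θ : ℝ → ℝ}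
    (hc : ∀ᵐ t ∂μ, |deriv cstar t| ≤ θ t) (hφ : ∀ t ∈ Ioo a b, |deriv (phiF ε γ lam) t| ≤ θ t) :
    ∀ᵐ t ∂μ, |deriv (omegaConstr cstar ε γ lam a b) t| ≤ θ t := by
  filter_upwards [hc, μ.ae_ne a, μ.ae_ne b] with t ht hta htb
  by_cases htab : t ∈ Icc a b
  · have ht' : t ∈ Ioo a b := ⟨htab.1.lt_of_ne' hta, htab.2.lt_of_ne htb⟩
    rw [deriv_omegaConstr_of_mem_Ioo ht', abs_neg]
    exact hφ t ht'
  · rwa [deriv_omegaConstr_of_notMem_Icc htab]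

end Construction

theorem abs_sub_le_modulus_sub_of_slack {c ψ ω : ℝ → ℝ} {T0 T1 b η C : ℝ}
    (hωmono : ∀ s t, 0 ≤ s → s ≤ t → ω s ≤ ω t) (hη : 0 ≤ η) (hb : b < T1)
    (hc : ∀ t ∈ Icc 0 T0, ∀ s ∈ Icc 0 T0, |c t - c s| ≤ ω |t - s|)
    (hc_slack : ∀ t ∈ Icc 0 T0, ∀ s ∈ Icc 0 T0, |c t - c s| ≤ (1 - η) * ω |t - s|)
    (hcC : ∀ t ∈ Icc 0 T1, c t = C) (hψ : ∀ s t, s < t → |ψ t - ψ s| ≤ ω (t - s))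
    (hψb : ∀ t, b ≤ t → ψ t = 0) (hωb : ω b ≤ η * ω (T1 - b)) :
    ∀ t ∈ Icc 0 T0, ∀ s ∈ Icc 0 T0, |(c - ψ) t - (c - ψ) s| ≤ ω |t - s| := by
  intro t ht s hs
  wlog hst : s < t generalizing s t
  · rcases (not_lt.mp hst).eq_or_lt with rfl | hts
    · simpa using hc t ht t ht
    · rw [abs_sub_comm, abs_sub_comm t]
      exact this s hs t ht hts
  simp only [Pi.sub_apply, abs_of_pos (sub_pos.mpr hst)]
  rcases le_or_gt t T1 with htT1 | hT1t
  · rw [hcC t ⟨ht.1, htT1⟩, hcC s ⟨hs.1, hst.le.trans htT1⟩, sub_sub_sub_cancel_left,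
      abs_sub_comm]
    exact hψ s t hst
  rw [hψb t (hb.trans hT1t).le, sub_zero]
  rcases le_or_gt b s with hbs | hsb
  · simpa [hψb s hbs, abs_of_pos (sub_pos.mpr hst)] using hc t ht s hs
  have hψs : |ψ s| ≤ η * ω (t - s) :=
    calc |ψ s| = |ψ b - ψ s| := by rw [hψb b le_rfl, zero_sub, abs_neg]
      _ ≤ ω (b - s) := hψ s b hsb
      _ ≤ ω b := hωmono _ _ (by linarith) (by linarith [hs.1])
      _ ≤ η * ω (T1 - b) := hωb
      _ ≤ η * ω (t - s) := by gcongr; exact hωmono _ _ (by linarith) (by linarith [hs.1])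
  calc |c t - (c s - ψ s)| ≤ |c t - c s| + |ψ s| := by
        rw [sub_sub_eq_add_sub, add_sub_right_comm]; exact abs_add_le _ _
    _ ≤ (1 - η) * ω (t - s) + η * ω (t - s) := by
        gcongr
        simpa [abs_of_pos (sub_pos.mpr hst)] using hc_slack t ht s hs
    _ = ω (t - s) := by ring

theorem omega_construction_membership_general
    (T0 μ1 μ2 T1 γ η : ℝ) (ω θ : ℝ → ℝ)
    (hω : IsModulusOfContinuity ω)
    (hθmono : AntitoneOn θ (Ioo 0 T0))
    (hT1 : T1 ∈ Ioo 0 T0) (hγ : 0 < γ) (hγ2 : γ ^ 2 ∈ Ioo μ1 μ2) (hη : η ∈ Ioo 0 1)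
    (cstar : ℝ → ℝ) (hcstar : MemD T0 μ1 μ2 ω θ T1 γ η cstar)
    (lam : ℝ) (hlam : 0 < lam)
    (hlam1 : nu1 μ1 * ω (1 / lam) ≤ 8 * γ ^ 3)
    (hlam2 : nu1 μ1 / (2 * γ) * ω (1 / lam) ≤ min (γ ^ 2 - μ1) (μ2 - γ ^ 2))
    (a b : ℝ) (ha : 0 < a) (hab : a < b) (hb : b < T1)
    (haN : ∃ n : ℕ, a * γ * lam / (2 * Real.pi) = n)
    (hbN : ∃ n : ℕ, b * γ * lam / (2 * Real.pi) = n)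
    (hωb : ω b ≤ η * ω (T1 - b))
    (hθb : nu1 μ1 * lam * ω (1 / lam) ≤ θ b) :
    MemPS T0 μ1 μ2 ω θ
        (omegaConstr cstar (nu1 μ1 * lam * ω (1 / lam)) γ lam a b) ∧
    ∀ t ∈ Icc 0 T0,
      |omegaConstr cstar (nu1 μ1 * lam * ω (1 / lam)) γ lam a b t - cstar t| ≤
        nu1 μ1 / (2 * γ) * ω (1 / lam) := by
  obtain ⟨⟨hc_cont, hc_lip, hc_bd, hc_mod, hc_ae⟩, hc_eq, hc_slack⟩ := hcstar
  obtain ⟨na, hna⟩ := haN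
  obtain ⟨nb, hnb⟩ := hbN
  set ε := nu1 μ1 * lam * ω (1 / lam)
  have hω1 : 0 < ω (1 / lam) := hω.1 _ (by positivity)
  have hε : 0 ≤ ε := mul_nonneg (mul_nonneg (nu1_nonneg μ1) hlam.le) hω1.le
  have hε8 : ε ≤ 8 * γ ^ 3 * lam := by nlinarith
  have hφ := abs_phiF_nu1_le hγ hlam hω1.le hlam1
  have hrepr := omegaConstr_eq_sub_IccExtend (ε := ε) hab.le
    (fun t ht => hc_eq t (Icc_subset_Icc ha.le hb.le ht)) (phiF_eq_zero hna) (phiF_eq_zero hnb)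
  set ψ := IccExtend hab.le (phiF ε γ lam ∘ Subtype.val)
  have hψ_lip : LipschitzWith ε.toNNReal ψ := (lipschitzWith_phiF hγ hlam hε hε8).iccExtend hab.le
  have hψ_bound (t : ℝ) : |ψ t| ≤ nu1 μ1 / (2 * γ) * ω (1 / lam) := hφ _
  have hψ_mod (s t : ℝ) (hst : s < t) : |ψ t - ψ s| ≤ ω (t - s) :=
    hω.abs_sub_le_of_lipschitzWith hlam hψ_lip
      (by rw [Real.coe_toNNReal _ hε]; nlinarith [nu1_le_one μ1, mul_pos hlam hω1])
      (fun t => (hψ_bound t).trans (nu1_div_mul_le_half hγ hω1.le hγ2.1.le)) hst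
  have hψ_zero (t : ℝ) (ht : b ≤ t) : ψ t = 0 :=
    (IccExtend_of_right_le _ _ ht).trans (phiF_eq_zero hnb)
  have hb_mem : b ∈ Ioo 0 T0 := ⟨ha.trans hab, hb.trans hT1.2⟩
  refine ⟨⟨?_, ?_, fun t ht => omegaConstr_mem_Icc (hc_bd t ht) ((hφ t).trans hlam2), ?_,
    ae_abs_deriv_omegaConstr_le hc_ae fun t ht => ?_⟩, fun t _ => ?_⟩
  · rw [hrepr]
    exact hc_cont.sub hψ_lip.continuous.continuousOn
  · rw [hrepr]
    exact hc_lip.sub hψ_lip.locallyLipschitz.locallyLipschitzOn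
  · rw [hrepr]
    exact abs_sub_le_modulus_sub_of_slack hω.2.2.1 hη.1.le hb hc_mod hc_slack hc_eq hψ_mod
      hψ_zero hωb
  · exact (abs_deriv_phiF_le hγ hlam hε hε8 t).trans
      (hθb.trans (hθmono ⟨ha.trans ht.1, ht.2.trans hb_mem.2⟩ hb_mem ht.2.le))
  · rw [hrepr, Pi.sub_apply, sub_sub_cancel_left, abs_neg]
    exact hψ_bound t

/-- `ω`-construction, Proposition `prop:omega`, statement (1). -/
theorem omega_construction_membership
    (T0 μ1 μ2 T1 γ η : ℝ) (ω θ : ℝ → ℝ)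
    (hT0 : 0 < T0) (hμ1 : 0 < μ1) (hμ12 : μ1 < μ2)
    (hω : IsModulusOfContinuity ω)
    (hθcont : ContinuousOn θ (Ioo 0 T0))
    (hθpos : ∀ t ∈ Ioo 0 T0, 0 < θ t)
    (hθmono : AntitoneOn θ (Ioo 0 T0))
    (hT1 : T1 ∈ Ioo 0 T0) (hγ : 0 < γ) (hγ2 : γ ^ 2 ∈ Ioo μ1 μ2) (hη : η ∈ Ioo 0 1)
    (cstar : ℝ → ℝ) (hcstar : MemD T0 μ1 μ2 ω θ T1 γ η cstar)
    (lam : ℝ) (hlam : 0 < lam)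
    (hlam1 : nu1 μ1 * ω (1 / lam) ≤ 8 * γ ^ 3)
    (hlam2 : nu1 μ1 / (2 * γ) * ω (1 / lam) ≤ min (γ ^ 2 - μ1) (μ2 - γ ^ 2))
    (a b : ℝ) (ha : 0 < a) (hab : a < b) (hb : b < T1)
    (haN : ∃ n : ℕ, a * γ * lam / (2 * Real.pi) = n)
    (hbN : ∃ n : ℕ, b * γ * lam / (2 * Real.pi) = n)
    (hωb : ω b ≤ η * ω (T1 - b))
    (hθb : nu1 μ1 * lam * ω (1 / lam) ≤ θ b) :
    MemPS T0 μ1 μ2 ω θ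
        (omegaConstr cstar (nu1 μ1 * lam * ω (1 / lam)) γ lam a b) ∧
    ∀ t ∈ Icc 0 T0,
      |omegaConstr cstar (nu1 μ1 * lam * ω (1 / lam)) γ lam a b t - cstar t| ≤
        nu1 μ1 / (2 * γ) * ω (1 / lam) :=
  omega_construction_membership_general T0 μ1 μ2 T1 γ η ω θ hω hθmono hT1 hγ hγ2 hη cstar hcstar lam
    hlam hlam1 hlam2 a b ha hab hb haN hbN hωb hθb
end

section
/- Let T₀ > 0, let ω be a modulus of continuity, and let θ : (0,T₀) → (0,∞) be continuous and nonincreasing. Assume that σ/ω(σ) → 0 as σ → 0⁺ and that ∫_0^{T₀} θ(t) dt = +∞. Then m(λ) → +∞ as λ → +∞. -/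
open Set Filter MeasureTheory

/-- proof of Corollary `cor:int-infty`: if `σ/ω(σ) → 0` as `σ → 0⁺`
and `θ` is not integrable near the origin, then `m(λ) → +∞`. -/
theorem mFun_tendsto_atTop
    (T0 : ℝ) (ω θ : ℝ → ℝ) (hT0 : 0 < T0)
    (hω : IsModulusOfContinuity ω)
    (hθcont : ContinuousOn θ (Ioo 0 T0))
    (hθpos : ∀ t ∈ Ioo 0 T0, 0 < θ t)
    (hθmono : AntitoneOn θ (Ioo 0 T0))
    (hωfast : Tendsto (fun σ => σ / ω σ) (nhdsWithin 0 (Ioi 0)) (nhds 0))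
    (hθdiv : ¬ IntegrableOn θ (Ioo 0 T0) volume) :
    Tendsto (mFun T0 ω θ) atTop atTop := by
  obtain ⟨hωpos, -, -, -⟩ := hω
  have hneT0 : ∀ᵐ t : ℝ, t ≠ T0 := by
    rw [ae_iff]
    simp only [not_not, setOf_eq_eq_singleton]
    exact Real.volume_singleton
  -- integrability on subintervals
  have key : ∀ s : ℝ, 0 < s → s < T0 → IntegrableOn θ (Ioc s T0) volume := by
    intro s hs hsT
    have hsub : Ioo s T0 ⊆ Ioo 0 T0 := Ioo_subset_Ioo hs.le le_rfl
    have hmeas : AEStronglyMeasurable θ (volume.restrict (Ioo s T0)) :=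
      (hθcont.mono hsub).aestronglyMeasurable measurableSet_Ioo
    have hbdd : ∀ᵐ t ∂(volume.restrict (Ioo s T0)), ‖θ t‖ ≤ θ s := by
      filter_upwards [ae_restrict_mem measurableSet_Ioo] with t ht
      have h1 : θ t ≤ θ s := hθmono ⟨hs, hsT⟩ (hsub ht) ht.1.le
      have h2 : 0 < θ t := hθpos t (hsub ht)
      rw [Real.norm_of_nonneg h2.le]; exact h1
    have hfin : IsFiniteMeasure (volume.restrict (Ioo s T0)) :=
      ⟨by rw [Measure.restrict_apply_univ]; simp [Real.volume_Ioo]⟩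
    have h3 : IntegrableOn θ (Ioo s T0) volume :=
      ⟨hmeas, HasFiniteIntegral.of_bounded hbdd⟩
    rwa [IntegrableOn, ← Measure.restrict_congr_set Ioo_ae_eq_Ioc]
  -- nonnegativity of integrals
  have nonneg : ∀ s : ℝ, 0 < s → s ≤ T0 → 0 ≤ ∫ t in s..T0, θ t := by
    intro s hs hsT
    apply intervalIntegral.integral_nonneg_of_ae_restrict hsT
    filter_upwards [ae_restrict_mem measurableSet_Icc, ae_restrict_of_ae hneT0] with t ht htne
    rcases eq_or_lt_of_le ht.1 with h | h
    · by_cases hsT' : s = T0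
      · exact absurd (hsT' ▸ h.symm) htne
      · exact (hθpos t ⟨h ▸ hs, h ▸ lt_of_le_of_ne hsT hsT'⟩).le
    · exact (hθpos t ⟨hs.trans h, lt_of_le_of_ne ht.2 htne⟩).le
  -- monotonicity
  have mono : ∀ s s₀ : ℝ, 0 < s → s ≤ s₀ → s₀ < T0 →
      (∫ t in s₀..T0, θ t) ≤ ∫ t in s..T0, θ t := by
    intro s s₀ hs hss hs₀T
    have hsT : s < T0 := lt_of_le_of_lt hss hs₀T
    have h1 : IntervalIntegrable θ volume s s₀ := by
      rw [intervalIntegrable_iff_integrableOn_Ioc_of_le hss]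
      exact (key s hs hsT).mono_set (Ioc_subset_Ioc le_rfl hs₀T.le)
    have h2 : IntervalIntegrable θ volume s₀ T0 := by
      rw [intervalIntegrable_iff_integrableOn_Ioc_of_le hs₀T.le]
      exact (key s hs hsT).mono_set (Ioc_subset_Ioc hss le_rfl)
    have hadd := intervalIntegral.integral_add_adjacent_intervals h1 h2
    have hnn : 0 ≤ ∫ t in s..s₀, θ t := by
      apply intervalIntegral.integral_nonneg_of_ae_restrict hss
      filter_upwards [ae_restrict_mem measurableSet_Icc, ae_restrict_of_ae hneT0] with t ht htne
      exact (hθpos t ⟨lt_of_lt_of_le hs ht.1, lt_of_le_of_ne (ht.2.trans hs₀T.le) htne⟩).le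
    linarith
  -- divergence of the integral
  have div : ∀ M : ℝ, ∃ s₀ ∈ Ioo 0 T0, M ≤ ∫ t in s₀..T0, θ t := by
    intro M
    by_contra hcon
    push_neg at hcon
    apply hθdiv
    have hb : ∀ n : ℕ, T0 / (n + 2) ∈ Ioo (0:ℝ) T0 := by
      intro n
      constructor
      · positivity
      · apply div_lt_self hT0
        have : (0:ℝ) ≤ n := Nat.cast_nonneg n
        linarith
    have hInt : IntegrableOn θ (Ioc 0 T0) volume := by
      apply integrableOn_Ioc_of_intervalIntegral_norm_bounded_left
        (a := fun n : ℕ => T0 / (n + 2)) (b := T0) (I := M) (l := atTop)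
      · intro n; exact key _ (hb n).1 (hb n).2
      · have h0 : Tendsto (fun n : ℕ => T0 / (n + 2)) atTop (nhds 0) := by
          apply Tendsto.div_atTop (tendsto_const_nhds)
          exact tendsto_atTop_add_const_right atTop 2 tendsto_natCast_atTop_atTop
        exact h0
      · apply Eventually.of_forall
        intro n
        have heq : ∫ x in Ioc (T0 / (n+2)) T0, ‖θ x‖ = ∫ x in Ioc (T0 / (n+2)) T0, θ x := by
          apply setIntegral_congr_ae measurableSet_Ioc
          filter_upwards [hneT0] with t htne ht
          exact Real.norm_of_nonneg (hθpos t ⟨lt_trans (hb n).1 ht.1,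
            lt_of_le_of_ne ht.2 htne⟩).le
        rw [heq, ← intervalIntegral.integral_of_le (hb n).2.le]
        exact (hcon _ (hb n)).le
    exact hInt.mono_set Ioo_subset_Ioc_self
  -- λ ω(1/λ) → ∞
  have hg : Tendsto (fun l : ℝ => l * ω (1 / l)) atTop atTop := by
    have h1 : Tendsto (fun l : ℝ => 1 / l) atTop (nhdsWithin 0 (Ioi 0)) := by
      apply tendsto_nhdsWithin_of_tendsto_nhds_of_eventually_within
      · simpa [one_div] using tendsto_inv_atTop_zero
      · filter_upwards [eventually_gt_atTop (0:ℝ)] with l hl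
        exact one_div_pos.2 hl
    have h2 : Tendsto (fun l : ℝ => (1 / l) / ω (1 / l)) atTop (nhdsWithin 0 (Ioi 0)) := by
      apply tendsto_nhdsWithin_of_tendsto_nhds_of_eventually_within _ (hωfast.comp h1)
      filter_upwards [eventually_gt_atTop (0:ℝ)] with l hl
      exact div_pos (one_div_pos.2 hl) (hωpos _ (one_div_pos.2 hl))
    have h3 := h2.inv_tendsto_nhdsGT_zero
    apply h3.congr'
    filter_upwards [eventually_gt_atTop (0:ℝ)] with l hl
    have hω1 : ω (1 / l) ≠ 0 := (hωpos _ (one_div_pos.2 hl)).ne'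
    simp only [Pi.inv_apply]
    rw [inv_div, div_eq_mul_inv, one_div, inv_inv, mul_comm]
  -- main argument
  rw [tendsto_atTop]
  intro M
  set M' := max M 1 with hM'def
  have hM'pos : (0:ℝ) < M' := lt_of_lt_of_le one_pos (le_max_right _ _)
  obtain ⟨s₀, hs₀, hints₀⟩ := div M'
  filter_upwards [hg.eventually_ge_atTop (M' / s₀), eventually_gt_atTop (0:ℝ)] with l hl hl0
  have hωl : 0 < ω (1 / l) := hωpos _ (one_div_pos.2 hl0)
  refine le_trans (le_max_left M 1) ?_
  rw [mFun]
  have himg : ((fun s => l * ω (1 / l) * s + ∫ t in s..T0, θ t) '' Ioc 0 T0).Nonempty :=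
    ((nonempty_Ioc).2 hT0).image _
  apply le_csInf himg
  rintro x ⟨s, hs, rfl⟩
  rcases le_total s s₀ with hss | hss
  · have hint : M' ≤ ∫ t in s..T0, θ t := hints₀.trans (mono s s₀ hs.1 hss hs₀.2)
    have : 0 ≤ l * ω (1 / l) * s := mul_nonneg (mul_pos hl0 hωl).le hs.1.le
    linarith
  · have h1 : M' ≤ l * ω (1 / l) * s := by
      have h2 : M' / s₀ * s₀ ≤ l * ω (1 / l) * s :=
        mul_le_mul hl (hss.trans' le_rfl) hs₀.1.le (mul_pos hl0 hωl).le
      rwa [div_mul_cancel₀ _ hs₀.1.ne'] at h2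
    have h2 : 0 ≤ ∫ t in s..T0, θ t := nonneg s hs.1 hs.2
    linarith
end

section
/- Let T₀ > 0, let ω be a modulus of continuity, and let θ : (0,T₀) → (0,∞) be continuous and nonincreasing. Assume that limsup_{t→0⁺} t·θ(t) < +∞ and that for every α ∈ (0,1) one has ω(σ)/σ^α → 0 as σ → 0⁺. Then m(λ)/log λ → 0 as λ → +∞. -/
/-!
Take `s = λ^(-β)` in the infimum defining `m(λ)`. The first term is `ω(σ) / σ^(1-β)` at
`σ = 1/λ`, which tends to `0`, and `θ(t) ≤ M / t` near `0` bounds `∫_s^{T₀} θ` by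
`M β log λ + O(1)`. Hence `limsup m(λ) / log λ ≤ M β` for every `β ∈ (0, 1)`, while `m ≥ 0`.
-/

open Set Filter MeasureTheory

open Topology

theorem AntitoneOn.intervalIntegrable_of_nonneg {f : ℝ → ℝ} {a b : ℝ} (hab : a ≤ b)
    (hf : AntitoneOn f (Ico a b)) (hf0 : ∀ t ∈ Ioo a b, 0 ≤ f t) :
    IntervalIntegrable f volume a b := by
  rw [intervalIntegrable_iff_integrableOn_Ioo_of_le hab]
  refine Integrable.mono' (integrableOn_const measure_Ioo_lt_top.ne (C := f a))
    (aemeasurable_restrict_of_antitoneOn measurableSet_Ioo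
      (hf.mono Ioo_subset_Ico_self)).aestronglyMeasurable ?_
  refine ae_restrict_of_forall_mem measurableSet_Ioo fun t ht => ?_
  rw [Real.norm_of_nonneg (hf0 t ht)]
  exact hf (left_mem_Ico.2 (ht.1.trans ht.2)) (Ioo_subset_Ico_self ht) ht.1.le

theorem intervalIntegral.integral_nonneg_of_forall_Ioo {f : ℝ → ℝ} {a b : ℝ} (hab : a ≤ b)
    (hf : ∀ t ∈ Ioo a b, 0 ≤ f t) : 0 ≤ ∫ t in a..b, f t := by
  refine intervalIntegral.integral_nonneg_of_ae_restrict hab ?_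
  rw [← Measure.restrict_congr_set Ioo_ae_eq_Icc]
  exact ae_restrict_of_forall_mem measurableSet_Ioo hf

theorem integral_le_mul_log_add {f : ℝ → ℝ} {s δ b M : ℝ} (hs : 0 < s) (hsδ : s ≤ δ)
    (hf₁ : IntervalIntegrable f volume s δ) (hf₂ : IntervalIntegrable f volume δ b)
    (hfM : ∀ t ∈ Icc s δ, f t ≤ M / t) :
    ∫ t in s..b, f t ≤ M * Real.log (δ / s) + ∫ t in δ..b, f t := by
  have hinv : IntervalIntegrable (fun t => M / t) volume s δ := by
    refine (continuousOn_const.div continuousOn_id fun t ht => ?_).intervalIntegrable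
    rw [uIcc_of_le hsδ] at ht
    exact (hs.trans_le ht.1).ne'
  have hM : ∫ t in s..δ, M / t = M * Real.log (δ / s) := by
    simp_rw [div_eq_mul_inv M]
    rw [intervalIntegral.integral_const_mul, integral_inv_of_pos hs (hs.trans_le hsδ)]
  rw [← intervalIntegral.integral_add_adjacent_intervals hf₁ hf₂, ← hM]
  gcongr
  exact intervalIntegral.integral_mono_on hsδ hf₁ hinv hfM

theorem tendsto_mul_mul_rpow_neg_atTop {ω : ℝ → ℝ} {β : ℝ}
    (hω : Tendsto (fun σ => ω σ / σ ^ (1 - β)) (𝓝[>] 0) (𝓝 0)) :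
    Tendsto (fun lam => lam * ω (1 / lam) * lam ^ (-β)) atTop (𝓝 0) := by
  refine (hω.comp tendsto_inv_atTop_nhdsGT_zero).congr' ?_
  filter_upwards [eventually_gt_atTop 0] with lam hlam
  rw [Function.comp_apply, one_div, Real.inv_rpow hlam.le, div_inv_eq_mul, sub_eq_add_neg,
    Real.rpow_add hlam, Real.rpow_one]
  ring

section mFun

variable {T0 : ℝ} {ω θ : ℝ → ℝ} {lam : ℝ}

theorem mFun_objective_nonneg (hlam : 0 ≤ lam) (hω : 0 ≤ ω (1 / lam))
    (hθ : ∀ t ∈ Ioo 0 T0, 0 ≤ θ t) {s : ℝ} (hs : s ∈ Ioc 0 T0) :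
    0 ≤ lam * ω (1 / lam) * s + ∫ t in s..T0, θ t :=
  add_nonneg (by have := hs.1; positivity) <|
    intervalIntegral.integral_nonneg_of_forall_Ioo hs.2 fun t ht => hθ t ⟨hs.1.trans ht.1, ht.2⟩

theorem mFun_nonneg (hlam : 0 ≤ lam) (hω : 0 ≤ ω (1 / lam))
    (hθ : ∀ t ∈ Ioo 0 T0, 0 ≤ θ t) : 0 ≤ mFun T0 ω θ lam :=
  Real.sInf_nonneg <| by
    rintro _ ⟨s, hs, rfl⟩
    exact mFun_objective_nonneg hlam hω hθ hs

theorem mFun_le (hlam : 0 ≤ lam) (hω : 0 ≤ ω (1 / lam))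
    (hθ : ∀ t ∈ Ioo 0 T0, 0 ≤ θ t) {s : ℝ} (hs : s ∈ Ioc 0 T0) :
    mFun T0 ω θ lam ≤ lam * ω (1 / lam) * s + ∫ t in s..T0, θ t := by
  refine csInf_le ⟨0, ?_⟩ (mem_image_of_mem _ hs)
  rintro _ ⟨s', hs', rfl⟩
  exact mFun_objective_nonneg hlam hω hθ hs'

theorem eventually_mFun_le {M δ β : ℝ} (hω : ∀ σ, 0 < σ → 0 < ω σ)
    (hθ_nonneg : ∀ t ∈ Ioo 0 T0, 0 ≤ θ t) (hθmono : AntitoneOn θ (Ioo 0 T0))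
    (hδ : δ ∈ Ioo 0 T0) (hθM : ∀ t ∈ Ioc 0 δ, θ t ≤ M / t) (hβ : 0 < β) :
    ∀ᶠ lam in atTop, mFun T0 ω θ lam ≤
      lam * ω (1 / lam) * lam ^ (-β) + M * β * Real.log lam
        + (M * Real.log δ + ∫ t in δ..T0, θ t) := by
  filter_upwards [eventually_gt_atTop 0,
    (tendsto_rpow_neg_atTop hβ).eventually (ge_mem_nhds hδ.1)] with lam hlam hsδ
  set s := lam ^ (-β)
  have hs : 0 < s := Real.rpow_pos_of_pos hlam _
  have hθ_int : ∀ a b, a ∈ Ioo 0 T0 → a ≤ b → b ≤ T0 → IntervalIntegrable θ volume a b :=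
    fun a b ha hab hbT => AntitoneOn.intervalIntegrable_of_nonneg hab
      (hθmono.mono (Ico_subset_Ioo_left ha.1 |>.trans (Ioo_subset_Ioo_right hbT)))
      fun t ht => hθ_nonneg t ⟨ha.1.trans ht.1, ht.2.trans_le hbT⟩
  calc mFun T0 ω θ lam
      ≤ lam * ω (1 / lam) * s + ∫ t in s..T0, θ t :=
        mFun_le hlam.le (hω _ (by positivity)).le hθ_nonneg ⟨hs, hsδ.trans hδ.2.le⟩
    _ ≤ lam * ω (1 / lam) * s + (M * Real.log (δ / s) + ∫ t in δ..T0, θ t) := by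
        gcongr
        exact integral_le_mul_log_add hs hsδ
          (hθ_int s δ ⟨hs, hsδ.trans_lt hδ.2⟩ hsδ hδ.2.le) (hθ_int δ T0 hδ hδ.2.le le_rfl)
          fun t ht => hθM t ⟨hs.trans_le ht.1, ht.2⟩
    _ = _ := by
        rw [Real.log_div hδ.1.ne' hs.ne', Real.log_rpow hlam]
        ring

end mFun

theorem exists_le_div_of_eventually_mul_le {θ : ℝ → ℝ} {M T0 : ℝ} (hT0 : 0 < T0)
    (h : ∀ᶠ t in 𝓝[>] 0, t * θ t ≤ M) : ∃ δ ∈ Ioo 0 T0, ∀ t ∈ Ioc 0 δ, θ t ≤ M / t := by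
  obtain ⟨u, hu, hsub⟩ := mem_nhdsGT_iff_exists_Ioc_subset.1 h
  refine ⟨min u (T0 / 2), ⟨lt_min hu (by positivity), by linarith [min_le_right u (T0 / 2)]⟩,
    fun t ht => ?_⟩
  rw [le_div_iff₀ ht.1, mul_comm]
  exact hsub ⟨ht.1, ht.2.trans (min_le_left _ _)⟩

theorem mFun_div_log_tendsto_zero_general
    (T0 : ℝ) (ω θ : ℝ → ℝ) (hT0 : 0 < T0)
    (hω : IsModulusOfContinuity ω)
    (hθpos : ∀ t ∈ Ioo 0 T0, 0 < θ t)
    (hθmono : AntitoneOn θ (Ioo 0 T0))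
    (hθbdd : ∃ M : ℝ, ∀ᶠ t in nhdsWithin 0 (Ioi 0), t * θ t ≤ M)
    (hωsmall : ∀ α ∈ Ioo (0:ℝ) 1,
      Tendsto (fun σ => ω σ / σ ^ α) (nhdsWithin 0 (Ioi 0)) (nhds 0)) :
    Tendsto (fun lam => mFun T0 ω θ lam / Real.log lam) atTop (nhds 0) := by
  have hθ_nonneg : ∀ t ∈ Ioo 0 T0, 0 ≤ θ t := fun t ht => (hθpos t ht).le
  obtain ⟨M, hM⟩ := hθbdd
  obtain ⟨δ, hδ, hθM⟩ := exists_le_div_of_eventually_mul_le hT0 hM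
  refine tendsto_order.2 ⟨fun a ha => ?_, fun a ha => ?_⟩
  · filter_upwards [eventually_gt_atTop 1] with lam hlam
    exact ha.trans_le <| div_nonneg (mFun_nonneg (by linarith) (hω.1 _ (by positivity)).le
      hθ_nonneg) (Real.log_pos hlam).le
  obtain ⟨β, ⟨hβ0, hβ1⟩, hMβ⟩ : ∃ β ∈ Ioo (0:ℝ) 1, M * β < a := by
    have : Tendsto (fun β => M * β) (𝓝[>] 0) (𝓝 0) :=
      ((continuous_const_mul M).tendsto' 0 0 (mul_zero M)).mono_left nhdsWithin_le_nhds
    exact (Eventually.and (Ioo_mem_nhdsGT one_pos) (this.eventually (gt_mem_nhds ha))).exists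
  set K := M * Real.log δ + ∫ t in δ..T0, θ t
  have hA := tendsto_mul_mul_rpow_neg_atTop (hωsmall (1 - β) ⟨by linarith, by linarith⟩)
  have hbound : Tendsto (fun lam => (lam * ω (1 / lam) * lam ^ (-β) + K) / Real.log lam + M * β)
      atTop (𝓝 (M * β)) := by
    simpa using ((hA.add_const K).div_atTop Real.tendsto_log_atTop).add_const (M * β)
  filter_upwards [eventually_mFun_le hω.1 hθ_nonneg hθmono hδ hθM hβ0, eventually_gt_atTop 1,
    hbound.eventually (gt_mem_nhds hMβ)] with lam hm hlam hlt
  have hlog := Real.log_pos hlam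
  refine lt_of_le_of_lt ?_ hlt
  rw [div_add' _ _ _ hlog.ne', div_le_div_iff_of_pos_right hlog]
  linarith

/-- proof of Corollary `cor:1/t`, statement (1): if `t·θ(t)` is bounded
near `0⁺` and `ω(σ)/σ^α → 0` for every `α ∈ (0,1)`, then `m(λ)/log λ → 0`. -/
theorem mFun_div_log_tendsto_zero
    (T0 : ℝ) (ω θ : ℝ → ℝ) (hT0 : 0 < T0)
    (hω : IsModulusOfContinuity ω)
    (hθcont : ContinuousOn θ (Ioo 0 T0))
    (hθpos : ∀ t ∈ Ioo 0 T0, 0 < θ t)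
    (hθmono : AntitoneOn θ (Ioo 0 T0))
    (hθbdd : ∃ M : ℝ, ∀ᶠ t in nhdsWithin 0 (Ioi 0), t * θ t ≤ M)
    (hωsmall : ∀ α ∈ Ioo (0:ℝ) 1,
      Tendsto (fun σ => ω σ / σ ^ α) (nhdsWithin 0 (Ioi 0)) (nhds 0)) :
    Tendsto (fun lam => mFun T0 ω θ lam / Real.log lam) atTop (nhds 0) :=
  mFun_div_log_tendsto_zero_general T0 ω θ hT0 hω hθpos hθmono hθbdd hωsmall
end

section
/- Let T₀ > 0, let 0 < μ₁ < μ₂, let ω be a modulus of continuity, and let c : [0,T₀] → ℝ be continuous with μ₁ ≤ c(t) ≤ μ₂ and |c(t) − c(s)| ≤ ω(|t−s|) for all t,s ∈ [0,T₀]. Extend c by setting ĉ(t) := c(t) for t ∈ [0,T₀] and ĉ(t) := c(T₀) for t ≥ T₀, and for ε > 0 define c_ε(t) := (1/ε)·∫_t^{t+ε} ĉ(s) ds for t ≥ 0. Then c_ε is continuously differentiable on [0,T₀] and satisfies, for every t ∈ [0,T₀]: μ₁ ≤ c_ε(t) ≤ μ₂, |c_ε(t) − c(t)| ≤ ω(ε),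 and |c_ε'(t)| ≤ ω(ε)/ε. -/
open Set Filter MeasureTheory

/-- The extension `ĉ` of `c`: equal to `c` on `(-∞, T₀]` and to `c(T₀)` afterwards. -/
noncomputable def hatExt (T0 : ℝ) (c : ℝ → ℝ) : ℝ → ℝ :=
  fun t => if t ≤ T0 then c t else c T0

/-- The mollification `c_ε(t) = (1/ε) ∫_t^{t+ε} ĉ(s) ds`. -/
noncomputable def mollify (T0 ε : ℝ) (c : ℝ → ℝ) : ℝ → ℝ :=
  fun t => 1 / ε * ∫ s in t..(t + ε), hatExt T0 c s

/-!
On `[0, T₀]` the mollifier only sees `ĉ` on `[0, ∞)`, where it agrees with the continuous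
extension `g` of `c` that is constant outside `[0, T₀]`. Since `projIcc` is a contraction, `g`
inherits the modulus `ω`, so on each window `[t, t + ε]` it deviates from `c t = g t` by at most
`ω ε`. The window average `c_ε` therefore stays in `[μ₁, μ₂]` and within `ω ε` of `c`, and by the
fundamental theorem of calculus its derivative is `(g (t + ε) - g t) / ε`.
-/

noncomputable def windowAverage (ε : ℝ) (g : ℝ → ℝ) (t : ℝ) : ℝ :=
  1 / ε * ∫ s in t..t + ε, g s

section WindowAverage

variable {ε t : ℝ} {g : ℝ → ℝ}

theorem windowAverage_congr (hε : 0 ≤ ε) {h : ℝ → ℝ} (hgh : EqOn g h (Icc t (t + ε))) :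
    windowAverage ε g t = windowAverage ε h t := by
  unfold windowAverage
  rw [intervalIntegral.integral_congr (by rwa [uIcc_of_le (by linarith)])]

theorem hasDerivAt_windowAverage (ε : ℝ) (hg : Continuous g) (t : ℝ) :
    HasDerivAt (windowAverage ε g) (1 / ε * (g (t + ε) - g t)) t := by
  have hprim : ∀ x, HasDerivAt (fun u => ∫ s in (0 : ℝ)..u, g s) (g x) x := fun x =>
    (hg.integral_hasStrictDerivAt 0 x).hasDerivAt
  have hdiff : windowAverage ε g =
      fun u => 1 / ε * ((∫ s in (0 : ℝ)..u + ε, g s) - ∫ s in (0 : ℝ)..u, g s) := by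
    ext u
    rw [intervalIntegral.integral_interval_sub_left (hg.intervalIntegrable _ _)
      (hg.intervalIntegrable _ _)]
    rfl
  rw [hdiff]
  exact ((HasDerivAt.comp_add_const t ε (hprim (t + ε))).sub (hprim t)).const_mul _

theorem le_windowAverage (hε : 0 < ε) (hg : IntervalIntegrable g volume t (t + ε))
    {m : ℝ} (hm : ∀ s ∈ Icc t (t + ε), m ≤ g s) : m ≤ windowAverage ε g t := by
  have := intervalIntegral.integral_mono_on (by linarith) intervalIntegrable_const hg hm
  rw [intervalIntegral.integral_const, smul_eq_mul, add_sub_cancel_left] at this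
  rw [windowAverage, one_div_mul_eq_div, le_div_iff₀ hε]
  linarith

theorem windowAverage_le (hε : 0 < ε) (hg : IntervalIntegrable g volume t (t + ε))
    {M : ℝ} (hM : ∀ s ∈ Icc t (t + ε), g s ≤ M) : windowAverage ε g t ≤ M := by
  have := intervalIntegral.integral_mono_on (by linarith) hg intervalIntegrable_const hM
  rw [intervalIntegral.integral_const, smul_eq_mul, add_sub_cancel_left] at this
  rw [windowAverage, one_div_mul_eq_div, div_le_iff₀ hε]
  linarith

theorem abs_windowAverage_sub_le (hε : 0 < ε)
    (hg : IntervalIntegrable g volume t (t + ε)) {a δ : ℝ}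
    (hδ : ∀ s ∈ Icc t (t + ε), |g s - a| ≤ δ) : |windowAverage ε g t - a| ≤ δ := by
  have hsub : windowAverage ε g t - a = (∫ s in t..t + ε, (g s - a)) / ε := by
    rw [windowAverage, intervalIntegral.integral_sub hg intervalIntegrable_const,
      intervalIntegral.integral_const, smul_eq_mul, add_sub_cancel_left]
    field_simp
  have hint : ‖∫ s in t..t + ε, (g s - a)‖ ≤ δ * |t + ε - t| :=
    intervalIntegral.norm_integral_le_of_norm_le_const (a := t) (b := t + ε) fun s hs =>
      hδ s (Ioc_subset_Icc_self (by rwa [uIoc_of_le (by linarith)] at hs))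
  rw [Real.norm_eq_abs, add_sub_cancel_left, abs_of_pos hε] at hint
  rw [hsub, abs_div, abs_of_pos hε, div_le_iff₀ hε]
  exact hint

end WindowAverage

theorem abs_IccExtend_sub_IccExtend_le {a b : ℝ} (hab : a ≤ b) {f : Icc a b → ℝ} {ω : ℝ → ℝ}
    (hω : MonotoneOn ω (Ici 0)) (hf : ∀ x y : Icc a b, |f x - f y| ≤ ω |(x : ℝ) - y|)
    (s u : ℝ) : |IccExtend hab f s - IccExtend hab f u| ≤ ω |s - u| :=
  (hf _ _).trans <|
    hω (mem_Ici.2 (abs_nonneg _)) (mem_Ici.2 (abs_nonneg _)) (abs_projIcc_sub_projIcc hab)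

theorem hatExt_eq_IccExtend {T0 : ℝ} (hT0 : 0 ≤ T0) (c : ℝ → ℝ) {s : ℝ} (hs : 0 ≤ s) :
    hatExt T0 c s = IccExtend hT0 ((Icc 0 T0).domRestrict c) s := by
  unfold hatExt
  split_ifs with h
  · rw [IccExtend_of_mem _ _ ⟨hs, h⟩, domRestrict_apply]
  · rw [IccExtend_of_right_le _ _ (le_of_not_ge h), domRestrict_apply]

theorem mollify_eq_windowAverage_IccExtend {T0 ε t : ℝ} (hT0 : 0 ≤ T0) (hε : 0 ≤ ε)
    (c : ℝ → ℝ) (ht : 0 ≤ t) :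
    mollify T0 ε c t = windowAverage ε (IccExtend hT0 ((Icc 0 T0).domRestrict c)) t :=
  windowAverage_congr hε fun _ hs => hatExt_eq_IccExtend hT0 c (ht.trans hs.1)

theorem mollify_estimates_general
    (T0 μ1 μ2 : ℝ) (ω : ℝ → ℝ)
    (hT0 : 0 < T0)
    (hω : IsModulusOfContinuity ω)
    (c : ℝ → ℝ) (hccont : ContinuousOn c (Icc 0 T0))
    (hcbound : ∀ t ∈ Icc 0 T0, μ1 ≤ c t ∧ c t ≤ μ2)
    (hcomega : ∀ t ∈ Icc 0 T0, ∀ s ∈ Icc 0 T0, |c t - c s| ≤ ω |t - s|)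
    (ε : ℝ) (hε : 0 < ε) :
    ∃ d : ℝ → ℝ,
      ContinuousOn d (Icc 0 T0) ∧
      (∀ t ∈ Icc 0 T0, HasDerivWithinAt (mollify T0 ε c) (d t) (Icc 0 T0) t) ∧
      ∀ t ∈ Icc 0 T0,
        μ1 ≤ mollify T0 ε c t ∧
        mollify T0 ε c t ≤ μ2 ∧
        |mollify T0 ε c t - c t| ≤ ω ε ∧
        |d t| ≤ ω ε / ε := by
  set g := IccExtend hT0.le ((Icc 0 T0).domRestrict c)
  have hωmono : MonotoneOn ω (Ici 0) := fun s hs u _ hsu => hω.2.2.1 s u hs hsu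
  have hg : Continuous g := hccont.domRestrict.Icc_extend'
  have hgb : ∀ s, μ1 ≤ g s ∧ g s ≤ μ2 := fun s => hcbound _ (projIcc 0 T0 hT0.le s).2
  have hwindow : ∀ t, ∀ s ∈ Icc t (t + ε), |g s - g t| ≤ ω ε := fun t s hs =>
    (abs_IccExtend_sub_IccExtend_le hT0.le hωmono (fun x y => hcomega x x.2 y y.2) s t).trans <|
      hωmono (mem_Ici.2 (abs_nonneg _)) hε.le
        (by rw [abs_of_nonneg (by linarith [hs.1])]; linarith [hs.2])
  have hmoll : ∀ t ∈ Icc 0 T0, mollify T0 ε c t = windowAverage ε g t := fun t ht =>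
    mollify_eq_windowAverage_IccExtend hT0.le hε.le c ht.1
  refine ⟨fun t => 1 / ε * (g (t + ε) - g t), by fun_prop, fun t ht =>
    (hasDerivAt_windowAverage ε hg t).hasDerivWithinAt.congr hmoll (hmoll t ht), fun t ht => ?_⟩
  have hint := hg.intervalIntegrable (μ := volume) t (t + ε)
  have hgt : g t = c t := IccExtend_of_mem hT0.le _ ht
  rw [hmoll t ht, ← hgt]
  refine ⟨le_windowAverage hε hint fun s _ => (hgb s).1,
    windowAverage_le hε hint fun s _ => (hgb s).2,
    abs_windowAverage_sub_le hε hint (hwindow t), ?_⟩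
  rw [abs_mul, abs_of_pos (one_div_pos.2 hε), one_div_mul_eq_div]
  exact div_le_div_of_nonneg_right (hwindow t _ ⟨by linarith, le_rfl⟩) hε.le

/-- mollification estimates, first step in the proof of the energy
estimates from above: `c_ε` is `C¹` on `[0,T₀]` with `μ₁ ≤ c_ε ≤ μ₂`,
`|c_ε - c| ≤ ω(ε)` and `|c_ε'| ≤ ω(ε)/ε`. -/
theorem mollify_estimates
    (T0 μ1 μ2 : ℝ) (ω : ℝ → ℝ)
    (hT0 : 0 < T0) (hμ1 : 0 < μ1) (hμ12 : μ1 < μ2)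
    (hω : IsModulusOfContinuity ω)
    (c : ℝ → ℝ) (hccont : ContinuousOn c (Icc 0 T0))
    (hcbound : ∀ t ∈ Icc 0 T0, μ1 ≤ c t ∧ c t ≤ μ2)
    (hcomega : ∀ t ∈ Icc 0 T0, ∀ s ∈ Icc 0 T0, |c t - c s| ≤ ω |t - s|)
    (ε : ℝ) (hε : 0 < ε) :
    ∃ d : ℝ → ℝ,
      ContinuousOn d (Icc 0 T0) ∧
      (∀ t ∈ Icc 0 T0, HasDerivWithinAt (mollify T0 ε c) (d t) (Icc 0 T0) t) ∧
      ∀ t ∈ Icc 0 T0,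
        μ1 ≤ mollify T0 ε c t ∧
        mollify T0 ε c t ≤ μ2 ∧
        |mollify T0 ε c t - c t| ≤ ω ε ∧
        |d t| ≤ ω ε / ε :=
  mollify_estimates_general T0 μ1 μ2 ω hT0 hω c hccont hcbound hcomega ε hε
end

section
/- Let T₀ > 0, let 0 < μ₁ < μ₂, let ω be a modulus of continuity, and let c : [0,T₀] → ℝ be continuous with μ₁ ≤ c(t) ≤ μ₂ and |c(t) − c(s)| ≤ ω(|t−s|) for all t,s ∈ [0,T₀]. Then for every λ > 0, every solution u of u'' + λ²·c(t)·u = 0 on [0,T₀] satisfies u'(t)² + λ²·u(t)² ≤ √M₁·(u'(0)² + λ²·u(0)²)·exp(M₂·λ·ω(1/λ)·t) for every t ∈ [0,T₀], where M₁ := (max{1,μ₂}/min{1,μ₁})² and M₂ := 1/μ₁ + 1/√μ₁. -/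
/-!
Freeze the coefficient at a value `γ` and consider `E_γ = u'² + λ² γ u²`. Along a solution
`E_γ' = 2 λ² u u' (γ - c)`, which by AM-GM (`2 √γ λ |u u'| ≤ E_γ`) is at most
`(λ ω(1/λ) / √μ₁) E_γ` as long as `|γ - c| ≤ ω(1/λ)`, i.e. on a cell of length `1/λ`.
Apply Gronwall on each cell `[k/λ, (k+1)/λ]` with `γ` the value of `c` at its left end; passing
to the next frozen value costs a factor `1 + ω(1/λ)/μ₁ ≤ exp (ω(1/λ)/μ₁)`, and before time `t`
there are at most `λ t` such switches, whence the rate `M₂ λ ω(1/λ)`. Finally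
`min{1,μ₁} E_1 ≤ E_γ ≤ max{1,μ₂} E_1`, and `max{1,μ₂} / min{1,μ₁} = √M₁`.
-/

open Set Filter MeasureTheory

/-- Constant `M₁ = (max{1,μ₂}/min{1,μ₁})²`. -/
noncomputable def M1 (μ1 μ2 : ℝ) : ℝ := (max 1 μ2 / min 1 μ1) ^ 2

/-- Constant `M₂ = 1/μ₁ + 1/√μ₁`. -/
noncomputable def M2 (μ1 : ℝ) : ℝ := 1 / μ1 + 1 / Real.sqrt μ1

open Real Topology

noncomputable def frozenEnergy (T0 lam γ : ℝ) (u : ℝ → ℝ) (t : ℝ) : ℝ :=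
  der T0 u t ^ 2 + lam ^ 2 * γ * u t ^ 2

section FrozenEnergy

variable {T0 lam γ : ℝ} {c u : ℝ → ℝ}

theorem frozenEnergy_nonneg (hγ : 0 ≤ γ) (t : ℝ) : 0 ≤ frozenEnergy T0 lam γ u t := by
  unfold frozenEnergy; positivity

theorem min_one_mul_frozenEnergy_one_le (t : ℝ) :
    min 1 γ * frozenEnergy T0 lam 1 u t ≤ frozenEnergy T0 lam γ u t := by
  unfold frozenEnergy
  have h1 : min 1 γ ≤ 1 := min_le_left _ _
  have h2 : min 1 γ ≤ γ := min_le_right _ _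
  nlinarith [mul_nonneg (sub_nonneg.2 h1) (sq_nonneg (der T0 u t)),
    mul_nonneg (sub_nonneg.2 h2) (mul_nonneg (sq_nonneg lam) (sq_nonneg (u t)))]

theorem frozenEnergy_le_max_one_mul_frozenEnergy_one (t : ℝ) :
    frozenEnergy T0 lam γ u t ≤ max 1 γ * frozenEnergy T0 lam 1 u t := by
  unfold frozenEnergy
  have h1 : 1 ≤ max 1 γ := le_max_left _ _
  have h2 : γ ≤ max 1 γ := le_max_right _ _
  nlinarith [mul_nonneg (sub_nonneg.2 h1) (sq_nonneg (der T0 u t)),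
    mul_nonneg (sub_nonneg.2 h2) (mul_nonneg (sq_nonneg lam) (sq_nonneg (u t)))]

theorem frozenEnergy_le_mul_exp_of_sub_le {γ' w μ : ℝ} (hμ : 0 < μ) (hμγ : μ ≤ γ) (hw : 0 ≤ w)
    (hγγ' : γ' - γ ≤ w) (t : ℝ) :
    frozenEnergy T0 lam γ' u t ≤ frozenEnergy T0 lam γ u t * exp (w / μ) := by
  set E := frozenEnergy T0 lam γ u t
  have hE : 0 ≤ E := frozenEnergy_nonneg (hμ.le.trans hμγ) t
  have hwμ : w ≤ w / μ * γ := by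
    rw [div_mul_eq_mul_div, le_div_iff₀ hμ]; exact mul_le_mul_of_nonneg_left hμγ hw
  have hpot : lam ^ 2 * γ * u t ^ 2 ≤ E := le_add_of_nonneg_left (sq_nonneg _)
  calc frozenEnergy T0 lam γ' u t = E + lam ^ 2 * (γ' - γ) * u t ^ 2 := by
        simp only [E, frozenEnergy]; ring
    _ ≤ E + lam ^ 2 * (w / μ * γ) * u t ^ 2 := by gcongr; exact hγγ'.trans hwμ
    _ = E + w / μ * (lam ^ 2 * γ * u t ^ 2) := by ring
    _ ≤ E * (1 + w / μ) := by nlinarith [mul_le_mul_of_nonneg_left hpot (div_nonneg hw hμ.le)]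
    _ ≤ E * exp (w / μ) := by gcongr; linarith [add_one_le_exp (w / μ)]

theorem hasDerivWithinAt_frozenEnergy (hu : IsSol T0 lam c u) {t : ℝ} (ht : t ∈ Icc 0 T0) :
    HasDerivWithinAt (frozenEnergy T0 lam γ u)
      (2 * lam ^ 2 * (u t * der T0 u t) * (γ - c t)) (Icc 0 T0) t := by
  have h := ((hu t ht).2.fun_pow 2).add (((hu t ht).1.fun_pow 2).const_mul (lam ^ 2 * γ))
  exact h.congr_deriv (by push_cast; ring)

theorem frozenEnergy_deriv_le (hγ : 0 < γ) (hlam : 0 ≤ lam) {w : ℝ} {t : ℝ}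
    (hw : |γ - c t| ≤ w) :
    2 * lam ^ 2 * (u t * der T0 u t) * (γ - c t) ≤
      lam * w / √γ * frozenEnergy T0 lam γ u t := by
  set v := der T0 u t
  set x := u t
  have hsγ : 0 < √γ := sqrt_pos.2 hγ
  have hw0 : 0 ≤ w := (abs_nonneg _).trans hw
  have hamgm : 2 * √γ * |lam * x * v| ≤ frozenEnergy T0 lam γ u t :=
    calc 2 * √γ * |lam * x * v| = 2 * √γ * (|v| * |lam * x|) := by rw [abs_mul]; ring
      _ ≤ |v| ^ 2 + √γ ^ 2 * |lam * x| ^ 2 := by nlinarith [sq_nonneg (|v| - √γ * |lam * x|)]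
      _ = frozenEnergy T0 lam γ u t := by
        rw [sq_abs, sq_abs, sq_sqrt hγ.le]; unfold frozenEnergy; ring
  rw [div_mul_eq_mul_div, le_div_iff₀ hsγ]
  calc 2 * lam ^ 2 * (x * v) * (γ - c t) * √γ
      ≤ |2 * lam ^ 2 * (x * v) * (γ - c t)| * √γ :=
        mul_le_mul_of_nonneg_right (le_abs_self _) hsγ.le
    _ = lam * |γ - c t| * (2 * √γ * |lam * x * v|) := by
        simp only [abs_mul, abs_pow, abs_two, abs_of_nonneg hlam]; ring
    _ ≤ lam * w * frozenEnergy T0 lam γ u t := by gcongr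

theorem frozenEnergy_le_mul_exp (hu : IsSol T0 lam c u) (hγ : 0 < γ) (hlam : 0 ≤ lam)
    {a b w : ℝ} (ha : 0 ≤ a) (hab : a ≤ b) (hb : b ≤ T0)
    (hcw : ∀ s ∈ Icc a b, |γ - c s| ≤ w) :
    frozenEnergy T0 lam γ u b ≤ frozenEnergy T0 lam γ u a * exp (lam * w / √γ * (b - a)) := by
  have hsub : Icc a b ⊆ Icc 0 T0 := Icc_subset_Icc ha hb
  have hderiv : ∀ s ∈ Icc a b, HasDerivWithinAt (frozenEnergy T0 lam γ u)
      (2 * lam ^ 2 * (u s * der T0 u s) * (γ - c s)) (Icc 0 T0) s :=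
    fun s hs => hasDerivWithinAt_frozenEnergy hu (hsub hs)
  have hcont : ContinuousOn (frozenEnergy T0 lam γ u) (Icc a b) :=
    fun s hs => ((hderiv s hs).continuousWithinAt).mono hsub
  have h := le_gronwallBound_of_liminf_deriv_right_le (K := lam * w / √γ) (ε := 0) hcont
    (fun s hs r hr => by
      have hs' : Icc 0 T0 ∈ 𝓝[≥] s :=
        Icc_mem_nhdsGE_of_mem ⟨ha.trans hs.1, hs.2.trans_le hb⟩
      simpa [slope_def_module] using
        ((hderiv s (Ico_subset_Icc_self hs)).mono_of_mem_nhdsWithin hs').liminf_right_slope_le hr)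
    le_rfl
    (fun s hs => by
      rw [add_zero]; exact frozenEnergy_deriv_le hγ hlam (hcw s (Ico_subset_Icc_self hs)))
    b ⟨hab, le_rfl⟩
  rwa [gronwallBound_ε0] at h

end FrozenEnergy

theorem frozenEnergy_one (T0 lam : ℝ) (u : ℝ → ℝ) (t : ℝ) :
    frozenEnergy T0 lam 1 u t = der T0 u t ^ 2 + lam ^ 2 * u t ^ 2 := by
  rw [frozenEnergy, mul_one]

theorem frozenEnergy_one_le_of_frozenEnergy_le {T0 lam μ1 μ2 γ γ' X s t : ℝ} {u : ℝ → ℝ}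
    (hμ1 : 0 < μ1) (hγ : μ1 ≤ γ) (hγ' : γ' ≤ μ2) (hX : 0 ≤ X)
    (h : frozenEnergy T0 lam γ u t ≤ frozenEnergy T0 lam γ' u s * X) :
    frozenEnergy T0 lam 1 u t ≤ max 1 μ2 / min 1 μ1 * frozenEnergy T0 lam 1 u s * X := by
  have hm : 0 < min 1 μ1 := lt_min one_pos hμ1
  rw [div_mul_eq_mul_div, div_mul_eq_mul_div, le_div_iff₀ hm, mul_comm]
  calc min 1 μ1 * frozenEnergy T0 lam 1 u t
      ≤ min 1 γ * frozenEnergy T0 lam 1 u t := by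
        gcongr; exact frozenEnergy_nonneg zero_le_one t
    _ ≤ frozenEnergy T0 lam γ u t := min_one_mul_frozenEnergy_one_le t
    _ ≤ frozenEnergy T0 lam γ' u s * X := h
    _ ≤ max 1 γ' * frozenEnergy T0 lam 1 u s * X := by
        gcongr; exact frozenEnergy_le_max_one_mul_frozenEnergy_one s
    _ ≤ max 1 μ2 * frozenEnergy T0 lam 1 u s * X := by
        gcongr; exact frozenEnergy_nonneg zero_le_one s

section Piecewise

variable {T0 lam μ w : ℝ} {c u : ℝ → ℝ}

theorem frozenEnergy_le_mul_exp_of_sub_le_inv (hu : IsSol T0 lam c u) (hlam : 0 ≤ lam)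
    (hμ : 0 < μ) (hcμ : ∀ t ∈ Icc 0 T0, μ ≤ c t)
    (hosc : ∀ s ∈ Icc 0 T0, ∀ t ∈ Icc 0 T0, |s - t| ≤ 1 / lam → |c s - c t| ≤ w)
    {a t : ℝ} (ha : 0 ≤ a) (hat : a ≤ t) (ht : t ≤ T0) (hta : t - a ≤ 1 / lam) :
    frozenEnergy T0 lam (c a) u t ≤
      frozenEnergy T0 lam (c a) u a * exp (lam * w / √μ * (t - a)) := by
  have hcw : ∀ s ∈ Icc a t, |c a - c s| ≤ w := fun s hs =>
    hosc a ⟨ha, hat.trans ht⟩ s ⟨ha.trans hs.1, hs.2.trans ht⟩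
      (by rw [abs_sub_comm, abs_of_nonneg (sub_nonneg.2 hs.1)]; linarith [hs.2])
  have hw : 0 ≤ w := (abs_nonneg _).trans (hcw a ⟨le_rfl, hat⟩)
  have hca : μ ≤ c a := hcμ a ⟨ha, hat.trans ht⟩
  refine (frozenEnergy_le_mul_exp hu (hμ.trans_le hca) hlam ha hat ht hcw).trans ?_
  gcongr
  exact frozenEnergy_nonneg (hμ.le.trans hca) a

theorem frozenEnergy_le_of_mem_Icc_div (hu : IsSol T0 lam c u) (hlam : 0 < lam)
    (hμ : 0 < μ) (hcμ : ∀ t ∈ Icc 0 T0, μ ≤ c t)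
    (hosc : ∀ s ∈ Icc 0 T0, ∀ t ∈ Icc 0 T0, |s - t| ≤ 1 / lam → |c s - c t| ≤ w)
    (k : ℕ) {t : ℝ} (ht : t ≤ T0) (hkt : k / lam ≤ t) (htk : t ≤ (k + 1) / lam) :
    frozenEnergy T0 lam (c (k / lam)) u t ≤
      frozenEnergy T0 lam (c 0) u 0 * exp (lam * w / √μ * t + w / μ * k) := by
  induction k generalizing t with
  | zero =>
    simp only [Nat.cast_zero, zero_div, zero_add, mul_zero, add_zero] at hkt htk ⊢
    simpa using frozenEnergy_le_mul_exp_of_sub_le_inv hu hlam.le hμ hcμ hosc le_rfl hkt ht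
      (by rwa [sub_zero])
  | succ k ih =>
    push_cast at hkt htk ⊢
    set a := ((k : ℝ) + 1) / lam
    have hk : (k : ℝ) / lam ≤ a := div_le_div_of_nonneg_right (by linarith) hlam.le
    have hk0 : 0 ≤ (k : ℝ) / lam := by positivity
    have hak : a - k / lam = 1 / lam := by simp only [a]; ring
    have hta : t - a ≤ 1 / lam := by
      have : ((k : ℝ) + 1 + 1) / lam = a + 1 / lam := by simp only [a]; ring
      linarith
    have hcell : frozenEnergy T0 lam (c (k / lam)) u a ≤
        frozenEnergy T0 lam (c 0) u 0 * exp (lam * w / √μ * a + w / μ * k) :=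
      ih (hkt.trans ht) hk le_rfl
    have hw : |c a - c (k / lam)| ≤ w :=
      hosc a ⟨hk0.trans hk, hkt.trans ht⟩ _ ⟨hk0, hk.trans (hkt.trans ht)⟩
        (by rw [abs_of_nonneg (by linarith), hak])
    have hswitch := frozenEnergy_le_mul_exp_of_sub_le (T0 := T0) (lam := lam) (u := u) hμ
      (hcμ _ ⟨hk0, hk.trans (hkt.trans ht)⟩) ((abs_nonneg _).trans hw) (abs_le.1 hw).2 a
    calc frozenEnergy T0 lam (c a) u t
        ≤ frozenEnergy T0 lam (c a) u a * exp (lam * w / √μ * (t - a)) :=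
          frozenEnergy_le_mul_exp_of_sub_le_inv hu hlam.le hμ hcμ hosc (hk0.trans hk) hkt ht hta
      _ ≤ frozenEnergy T0 lam (c 0) u 0 * exp (lam * w / √μ * a + w / μ * k) * exp (w / μ) *
            exp (lam * w / √μ * (t - a)) := by gcongr; exact hswitch.trans (by gcongr)
      _ = frozenEnergy T0 lam (c 0) u 0 * exp (lam * w / √μ * t + w / μ * (k + 1)) := by
          rw [mul_assoc, mul_assoc, ← exp_add, ← exp_add]; ring_nf

end Piecewise

theorem sqrt_M1 {μ1 : ℝ} (hμ1 : 0 < μ1) (μ2 : ℝ) : √(M1 μ1 μ2) = max 1 μ2 / min 1 μ1 :=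
  sqrt_sq (div_nonneg (zero_le_one.trans (le_max_left _ _)) (lt_min one_pos hμ1).le)

theorem energy_estimate_omega_continuous_general
    (T0 μ1 μ2 : ℝ) (ω : ℝ → ℝ)
    (hμ1 : 0 < μ1)
    (hω : IsModulusOfContinuity ω)
    (c : ℝ → ℝ)
    (hcbound : ∀ t ∈ Icc 0 T0, μ1 ≤ c t ∧ c t ≤ μ2)
    (hcomega : ∀ t ∈ Icc 0 T0, ∀ s ∈ Icc 0 T0, |c t - c s| ≤ ω |t - s|)
    (lam : ℝ) (hlam : 0 < lam)
    (u : ℝ → ℝ) (hu : IsSol T0 lam c u) :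
    ∀ t ∈ Icc 0 T0,
      (der T0 u t) ^ 2 + lam ^ 2 * (u t) ^ 2 ≤
        Real.sqrt (M1 μ1 μ2) * ((der T0 u 0) ^ 2 + lam ^ 2 * (u 0) ^ 2) *
          Real.exp (M2 μ1 * (lam * ω (1 / lam)) * t) := by
  intro t ht
  obtain ⟨hωpos, -, hωmono, -⟩ := hω
  set w := ω (1 / lam)
  have hw : 0 ≤ w := (hωpos _ (one_div_pos.2 hlam)).le
  have hosc : ∀ s ∈ Icc 0 T0, ∀ r ∈ Icc 0 T0, |s - r| ≤ 1 / lam → |c s - c r| ≤ w :=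
    fun s hs r hr h => (hcomega s hs r hr).trans (hωmono _ _ (abs_nonneg _) h)
  set k := ⌊lam * t⌋₊
  have hkt : (k : ℝ) ≤ lam * t := Nat.floor_le (mul_nonneg hlam.le ht.1)
  have htk : lam * t < k + 1 := Nat.lt_floor_add_one _
  have hkt' : (k : ℝ) / lam ≤ t := by rw [div_le_iff₀ hlam]; linarith
  have hcell := frozenEnergy_le_of_mem_Icc_div hu hlam hμ1 (fun s hs => (hcbound s hs).1) hosc k
    ht.2 hkt' (by rw [le_div_iff₀ hlam]; linarith)
  have hrate : lam * w / √μ1 * t + w / μ1 * k ≤ M2 μ1 * (lam * w) * t := by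
    have : w / μ1 * k ≤ w / μ1 * (lam * t) := by gcongr
    calc _ ≤ lam * w / √μ1 * t + w / μ1 * (lam * t) := by linarith
      _ = M2 μ1 * (lam * w) * t := by rw [M2]; ring
  have h0 : (0 : ℝ) ∈ Icc 0 T0 := ⟨le_rfl, ht.1.trans ht.2⟩
  have hc0 : 0 ≤ c 0 := hμ1.le.trans (hcbound 0 h0).1
  rw [← frozenEnergy_one, ← frozenEnergy_one, sqrt_M1 hμ1]
  refine frozenEnergy_one_le_of_frozenEnergy_le hμ1 (hcbound _ ⟨by positivity, hkt'.trans ht.2⟩).1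
    (hcbound 0 h0).2 (exp_pos _).le (hcell.trans ?_)
  gcongr
  exact frozenEnergy_nonneg hc0 0

/-- energy estimate for `ω`-continuous coefficients, estimate
(est:E-kov) in the proof of Theorem 1.(1). -/
theorem energy_estimate_omega_continuous
    (T0 μ1 μ2 : ℝ) (ω : ℝ → ℝ)
    (hT0 : 0 < T0) (hμ1 : 0 < μ1) (hμ12 : μ1 < μ2)
    (hω : IsModulusOfContinuity ω)
    (c : ℝ → ℝ) (hccont : ContinuousOn c (Icc 0 T0))
    (hcbound : ∀ t ∈ Icc 0 T0, μ1 ≤ c t ∧ c t ≤ μ2)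
    (hcomega : ∀ t ∈ Icc 0 T0, ∀ s ∈ Icc 0 T0, |c t - c s| ≤ ω |t - s|)
    (lam : ℝ) (hlam : 0 < lam)
    (u : ℝ → ℝ) (hu : IsSol T0 lam c u) :
    ∀ t ∈ Icc 0 T0,
      (der T0 u t) ^ 2 + lam ^ 2 * (u t) ^ 2 ≤
        Real.sqrt (M1 μ1 μ2) * ((der T0 u 0) ^ 2 + lam ^ 2 * (u 0) ^ 2) *
          Real.exp (M2 μ1 * (lam * ω (1 / lam)) * t) :=
  energy_estimate_omega_continuous_general T0 μ1 μ2 ω hμ1 hω c hcbound hcomega lam hlam u hu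
end

section
/- Let T₀ > 0, let c : [0,T₀] → ℝ be continuous, let {λ_n} be a sequence of positive real numbers with λ_n → +∞, and let φ : (0,∞) → (0,∞) satisfy φ(λ_n) ≥ n for every n ≥ 1 and φ(λ_n)/log λ_n → +∞ as n → ∞. Assume that c is a universal activator of the sequence {λ_n} with rate φ. For every n set a_n := exp(−φ(λ_n)/4), and let v_{λ_n} be the solution of v'' + λ_n²·c(t)·v = 0 with v(0) = 0 and v'(0) = 1. Then for every β ∈ ℝ the series Σ_n λ_n^{4β}·a_n² converges, whereas for every γ ∈ ℝ and every t ∈ (0,T₀] the series Σ_n λ_n^{−4γ}·a_n²·(v_{λ_n}'(t)² + λ_n²·v_{λ_n}(t)²) diverges. -/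
open Set Filter MeasureTheory

/-- infinite derivative loss in the proof of Proposition
`prop:ua2idl`: for a universal activator with `φ(λₙ) ≥ n` and `φ(λₙ)/log λₙ → ∞`, the
initial datum series converges for every `β`, while the solution series diverges for
every `γ` and every positive time. -/
theorem universal_activator_infinite_derivative_loss
    (T0 : ℝ) (hT0 : 0 < T0)
    (c : ℝ → ℝ) (hccont : ContinuousOn c (Icc 0 T0))
    (lamSeq : ℕ → ℝ) (hlamPos : ∀ n, 0 < lamSeq n)
    (hlamTop : Tendsto lamSeq atTop atTop)
    (φ : ℝ → ℝ)
    (hφn : ∀ n : ℕ, 1 ≤ n → (n : ℝ) ≤ φ (lamSeq n))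
    (hφlog : Tendsto (fun n => φ (lamSeq n) / Real.log (lamSeq n)) atTop atTop)
    (v : ℕ → ℝ → ℝ)
    (hv : ∀ n, IsSol T0 (lamSeq n) c (v n) ∧ v n 0 = 0 ∧ der T0 (v n) 0 = 1)
    (hUA : ∀ t ∈ Ioc 0 T0,
      1 ≤ Filter.limsup (fun n =>
          ((der T0 (v n) t) ^ 2 + (lamSeq n) ^ 2 * (v n t) ^ 2) *
            Real.exp (-φ (lamSeq n))) atTop) :
    (∀ β : ℝ,
      Summable (fun n =>
        lamSeq n ^ (4 * β) * Real.exp (-φ (lamSeq n) / 4) ^ 2)) ∧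
    ∀ γ : ℝ, ∀ t ∈ Ioc 0 T0,
      ¬ Summable (fun n =>
        lamSeq n ^ (-(4 * γ)) * Real.exp (-φ (lamSeq n) / 4) ^ 2 *
          ((der T0 (v n) t) ^ 2 + (lamSeq n) ^ 2 * (v n t) ^ 2)) := by
  have hloggrow : ∀ᶠ n in atTop, (1:ℝ) ≤ Real.log (lamSeq n) := by
    filter_upwards [hlamTop.eventually_ge_atTop (Real.exp 1)] with n hn
    exact (Real.le_log_iff_exp_le (hlamPos n)).2 hn
  constructor
  · intro β
    have hgs : Summable (fun n : ℕ => Real.exp (-(1/4) : ℝ) ^ n) :=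
      summable_geometric_of_lt_one (Real.exp_nonneg _)
        (Real.exp_lt_one_iff.2 (by norm_num))
    refine summable_of_isBigO_nat hgs (Asymptotics.IsBigO.of_bound 1 ?_)
    filter_upwards [hloggrow, hφlog.eventually_ge_atTop (16 * |β|),
      eventually_ge_atTop 1] with n hL hr hn1
    set L := Real.log (lamSeq n)
    set Φ := φ (lamSeq n)
    have hφn' : (n : ℝ) ≤ Φ := hφn n hn1
    have hL0 : (0:ℝ) < L := lt_of_lt_of_le one_pos hL
    have h1 : 4 * β * L ≤ Φ / 4 := by
      have h2 : 4 * β * L ≤ 4 * |β| * L := by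
        have := le_abs_self β
        nlinarith
      have h3 : 16 * |β| * L ≤ Φ := (le_div_iff₀ hL0).1 hr
      linarith
    have hrw : lamSeq n ^ (4 * β) * Real.exp (-Φ / 4) ^ 2
        = Real.exp (L * (4 * β) + (-Φ / 4 + -Φ / 4)) := by
      rw [Real.rpow_def_of_pos (hlamPos n), sq, ← Real.exp_add, ← Real.exp_add]
    have hnn : (0:ℝ) ≤ lamSeq n ^ (4 * β) * Real.exp (-Φ / 4) ^ 2 :=
      mul_nonneg (Real.rpow_nonneg (hlamPos n).le _) (sq_nonneg _)
    rw [Real.norm_eq_abs, Real.norm_eq_abs, abs_of_nonneg hnn,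
      abs_of_nonneg (pow_nonneg (Real.exp_nonneg _) n), one_mul, hrw,
      ← Real.exp_nat_mul]
    apply Real.exp_le_exp.2
    have : (n:ℝ) * (-(1/4)) = -(n:ℝ)/4 := by ring
    rw [this]
    nlinarith
  · intro γ t ht hsum
    have h0 := hsum.tendsto_atTop_zero
    set E : ℕ → ℝ := fun n => (der T0 (v n) t) ^ 2 + (lamSeq n) ^ 2 * (v n t) ^ 2 with hE
    have hEnn : ∀ n, 0 ≤ E n := fun n => by positivity
    have hcb : IsCoboundedUnder (· ≤ ·) atTop
        (fun n => E n * Real.exp (-φ (lamSeq n))) :=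
      isCoboundedUnder_le_of_le atTop (fun n => by positivity)
    have hfreq : ∃ᶠ n in atTop, (1:ℝ)/2 < E n * Real.exp (-φ (lamSeq n)) :=
      frequently_lt_of_lt_limsup hcb (lt_of_lt_of_le (by norm_num) (hUA t ht))
    have hsmall : ∀ᶠ n in atTop,
        lamSeq n ^ (-(4 * γ)) * Real.exp (-φ (lamSeq n) / 4) ^ 2 * E n < 1/2 := by
      have := h0.eventually (gt_mem_nhds (show (0:ℝ) < 1/2 by norm_num))
      filter_upwards [this] with n hn
      exact hn
    have hbig : ∀ᶠ n in atTop,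
        1/2 < lamSeq n ^ (-(4 * γ)) * Real.exp (-φ (lamSeq n) / 4) ^ 2 * E n ∨
        ¬ ((1:ℝ)/2 < E n * Real.exp (-φ (lamSeq n))) := by
      filter_upwards [hloggrow, hφlog.eventually_ge_atTop (16 * |γ|),
        eventually_ge_atTop 4] with n hL hr hn4
      by_cases hc : (1:ℝ)/2 < E n * Real.exp (-φ (lamSeq n))
      · left
        set L := Real.log (lamSeq n)
        set Φ := φ (lamSeq n)
        have hφn' : (n : ℝ) ≤ Φ := hφn n (by omega)
        have hn4' : (4:ℝ) ≤ (n:ℝ) := by exact_mod_cast hn4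
        have hL0 : (0:ℝ) < L := lt_of_lt_of_le one_pos hL
        have hEbig : Real.exp Φ / 2 < E n := by
          have h5 := mul_lt_mul_of_pos_right hc (Real.exp_pos Φ)
          rw [mul_assoc, ← Real.exp_add, neg_add_cancel, Real.exp_zero, mul_one] at h5
          linarith
        have hγL : 4 * |γ| * L ≤ Φ / 4 := by
          have h3 : 16 * |γ| ≤ Φ / L := hr
          have := (le_div_iff₀ hL0).1 h3
          nlinarith
        have hexp : (1:ℝ) ≤ L * (-(4 * γ)) + (-Φ / 4 + -Φ / 4) + Φ := by
          have habs : -(4 * |γ|) * L ≤ L * (-(4 * γ)) := by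
            nlinarith [mul_nonneg (sub_nonneg.2 (le_abs_self γ)) hL0.le]
          nlinarith
        have hrw : lamSeq n ^ (-(4 * γ)) * Real.exp (-Φ / 4) ^ 2
            = Real.exp (L * (-(4 * γ)) + (-Φ / 4 + -Φ / 4)) := by
          rw [Real.rpow_def_of_pos (hlamPos n), sq, ← Real.exp_add, ← Real.exp_add]
        rw [hrw]
        calc (1:ℝ)/2 ≤ Real.exp 1 / 2 := by
              have := Real.one_le_exp (le_of_lt one_pos)
              linarith
          _ ≤ Real.exp (L * (-(4 * γ)) + (-Φ / 4 + -Φ / 4)) * (Real.exp Φ / 2) := by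
              rw [← mul_div_assoc, ← Real.exp_add]
              have := Real.exp_le_exp.2 hexp
              linarith
          _ < Real.exp (L * (-(4 * γ)) + (-Φ / 4 + -Φ / 4)) * E n :=
              mul_lt_mul_of_pos_left hEbig (Real.exp_pos _)
      · right; exact hc
    obtain ⟨n, hf, hs, hb⟩ := (hfreq.and_eventually (hsmall.and hbig)).exists
    rcases hb with hb | hb
    · linarith
    · exact hb hf
end

section
/- Let T₀ > 0, let c : [0,T₀] → ℝ be continuous, let {λ_n} be a sequence of positive real numbers with λ_n → +∞, and let φ : (0,∞) → (0,∞) satisfy φ(λ_n) ≥ n for every n ≥ 1. Assume that c is a universal activator of the sequence {λ_n} with rate φ. For every n set a_n := exp(−φ(λ_n)/4), and let v_{λ_n} be the solution of v'' + λ_n²·c(t)·v = 0 with v(0) = 0 and v'(0) = 1. Then the series Σ_n a_n² converges, whereas for every t ∈ (0,T₀] the series Σ_n a_n²·(v_{λ_n}'(t)² + λ_n²·v_{λ_n}(t)²) diverges. -/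
open Set Filter MeasureTheory

/-- arbitrarily small derivative loss in the proof of Proposition
`prop:ua2idl`: for a universal activator with `φ(λₙ) ≥ n`, the initial datum series
converges, while the solution energy series diverges at every positive time. -/
theorem universal_activator_small_derivative_loss
    (T0 : ℝ) (hT0 : 0 < T0)
    (c : ℝ → ℝ) (hccont : ContinuousOn c (Icc 0 T0))
    (lamSeq : ℕ → ℝ) (hlamPos : ∀ n, 0 < lamSeq n)
    (hlamTop : Tendsto lamSeq atTop atTop)
    (φ : ℝ → ℝ)
    (hφn : ∀ n : ℕ, 1 ≤ n → (n : ℝ) ≤ φ (lamSeq n))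
    (v : ℕ → ℝ → ℝ)
    (hv : ∀ n, IsSol T0 (lamSeq n) c (v n) ∧ v n 0 = 0 ∧ der T0 (v n) 0 = 1)
    (hUA : ∀ t ∈ Ioc 0 T0,
      1 ≤ Filter.limsup (fun n =>
          ((der T0 (v n) t) ^ 2 + (lamSeq n) ^ 2 * (v n t) ^ 2) *
            Real.exp (-φ (lamSeq n))) atTop) :
    Summable (fun n => Real.exp (-φ (lamSeq n) / 4) ^ 2) ∧
    ∀ t ∈ Ioc 0 T0,
      ¬ Summable (fun n =>
        Real.exp (-φ (lamSeq n) / 4) ^ 2 *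
          ((der T0 (v n) t) ^ 2 + (lamSeq n) ^ 2 * (v n t) ^ 2)) := by
  have hterm : ∀ n : ℕ, Real.exp (-φ (lamSeq n) / 4) ^ 2 = Real.exp (-φ (lamSeq n) / 2) := by
    intro n
    rw [← Real.exp_nat_mul]
    ring_nf
  have hsum : Summable (fun n => Real.exp (-φ (lamSeq n) / 4) ^ 2) := by
    rw [← summable_nat_add_iff 1]
    refine Summable.of_nonneg_of_le (fun n => by positivity) (fun n => ?_)
      ((summable_geometric_of_lt_one (r := Real.exp (-(1:ℝ)/2)) (by positivity)
        (by rw [Real.exp_lt_one_iff]; norm_num)).comp_injective (add_left_injective 1))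
    show _ ≤ Real.exp (-(1:ℝ)/2) ^ (n+1)
    rw [hterm, ← Real.exp_nat_mul]
    apply Real.exp_le_exp.2
    have h := hφn (n+1) (Nat.le_add_left 1 n)
    push_cast at h ⊢
    nlinarith
  refine ⟨hsum, fun t ht hS => ?_⟩
  set E : ℕ → ℝ := fun n => (der T0 (v n) t) ^ 2 + (lamSeq n) ^ 2 * (v n t) ^ 2 with hE
  have hE0 : ∀ n, 0 ≤ E n := fun n => by positivity
  have htend := hS.tendsto_atTop_zero
  have h0 : Tendsto (fun n => E n * Real.exp (-φ (lamSeq n))) atTop (nhds 0) := by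
    apply tendsto_of_tendsto_of_tendsto_of_le_of_le' tendsto_const_nhds htend
    · exact Eventually.of_forall fun n => by positivity
    · filter_upwards [eventually_ge_atTop 1] with n hn
      have h1 : (1:ℝ) ≤ φ (lamSeq n) := le_trans (by exact_mod_cast hn) (hφn n hn)
      have h2 : Real.exp (-φ (lamSeq n)) ≤ Real.exp (-φ (lamSeq n) / 2) * 1 := by
        rw [mul_one]; apply Real.exp_le_exp.2; linarith
      calc E n * Real.exp (-φ (lamSeq n))
          ≤ E n * (Real.exp (-φ (lamSeq n) / 2) * 1) :=
            mul_le_mul_of_nonneg_left h2 (hE0 n)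
        _ = Real.exp (-φ (lamSeq n) / 4) ^ 2 * E n := by rw [hterm]; ring
  have := hUA t ht
  rw [h0.limsup_eq] at this
  linarith
end
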